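/- arXiv:2504.18489 — 10 statements merged into one kernel-verified Lean document; each statement's English description precedes it below -/
import Mathlib

section
/- For every real p with 0 < p < 1 and every positive integer n, there exist a positive integer m and a matrix A with entries in {0,1}, having n rows and m columns, such that for every vector x ∈ {0,1}^m one has ‖A(p·𝟏 − x)‖_∞ ≥ √(n−1)/16 (where 𝟏 is the all-ones vector in ℝ^m). Equivalently, the maximum over matrices of the p-weighted discrepancy satisfies wdisc^max_p(n) ≥ √(n−1)/16. -/
/-!
Let `H` be the `2ᵏ × 2ᵏ` Walsh–Hadamard matrix, `B = (J + H)/2` its `0/1` version, and repeat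
every column of `B` `t` times, where `t p` is at distance at least `1/4` from `ℤ`. For a `0/1`
vector `x`, `A(p𝟏 - x) = B c` with block sums `c_b = t p - (integer)`, so `|c_b| ≥ 1/4`.
Since `HᵀH = 2ᵏ I` and the column `b = 0` of `H` is all ones,
`∑ₐ (B c)ₐ² = 2ᵏ/4 ((∑ c + c₀)² + ∑_{b ≠ 0} c_b²) ≥ 2ᵏ (2ᵏ - 1)/64`,
so some row has `|(B c)ₐ| ≥ √(2ᵏ - 1)/8 ≥ √(n - 1)/16` when `2ᵏ ≤ n < 2ᵏ⁺¹`;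
the remaining rows of `A` repeat rows of `B`.
-/

open Finset Matrix

section Hadamard

variable {ι κ : Type*}

noncomputable def binaryOfSigns (H : Matrix ι κ ℝ) : Matrix ι κ ℝ :=
  of fun a b => (1 + H a b) / 2

theorem binaryOfSigns_apply_eq_zero_or_one {H : Matrix ι κ ℝ} {a : ι} {b : κ}
    (h : H a b = 1 ∨ H a b = -1) : binaryOfSigns H a b = 0 ∨ binaryOfSigns H a b = 1 := by
  rcases h with h | h <;> simp [binaryOfSigns, h]

variable [Fintype ι] [DecidableEq ι] {H : Matrix ι ι ℝ} {b₀ : ι}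

theorem sum_sq_binaryOfSigns_mulVec (hH : Hᵀ * H = (Fintype.card ι : ℝ) • 1)
    (h₀ : ∀ a, H a b₀ = 1) (c : ι → ℝ) :
    ∑ a, (binaryOfSigns H *ᵥ c) a ^ 2 =
      Fintype.card ι / 4 * ((∑ b, c b + c b₀) ^ 2 + ∑ b ∈ univ.erase b₀, c b ^ 2) := by
  set N : ℝ := (Fintype.card ι : ℝ)
  set h := H *ᵥ c
  have hHh : Hᵀ *ᵥ h = N • c := by rw [mulVec_mulVec, hH, smul_mulVec, one_mulVec]
  have hsum : ∑ a, h a = N * c b₀ := by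
    simpa [mulVec, dotProduct, h₀] using congrFun hHh b₀
  have hsq : ∑ a, h a ^ 2 = N * ∑ b, c b ^ 2 := by
    calc ∑ a, h a ^ 2 = h ⬝ᵥ (H *ᵥ c) := by simp [h, dotProduct, sq]
      _ = (Hᵀ *ᵥ h) ⬝ᵥ c := by rw [dotProduct_mulVec, mulVec_transpose]
      _ = N * ∑ b, c b ^ 2 := by simp [hHh, dotProduct, mul_sum, sq, mul_assoc]
  have hrow : ∀ a, (binaryOfSigns H *ᵥ c) a = (∑ b, c b + h a) / 2 := by
    intro a
    simp [binaryOfSigns, h, mulVec, dotProduct, add_mul, sum_add_distrib, ← sum_div,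
      div_mul_eq_mul_div]
  simp only [hrow, div_pow, add_sq, ← sum_div, sum_add_distrib, ← mul_sum, sum_const, card_univ,
    nsmul_eq_mul]
  rw [hsum, hsq, sum_erase_eq_sub (mem_univ b₀)]
  ring

theorem exists_le_sq_binaryOfSigns_mulVec (hH : Hᵀ * H = (Fintype.card ι : ℝ) • 1)
    (h₀ : ∀ a, H a b₀ = 1) {c : ι → ℝ} {δ : ℝ} (hc : ∀ b, δ ≤ c b ^ 2) :
    ∃ a, (Fintype.card ι - 1) * δ / 4 ≤ (binaryOfSigns H *ᵥ c) a ^ 2 := by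
  have hδ : (Fintype.card ι - 1) * δ ≤ ∑ b ∈ univ.erase b₀, c b ^ 2 := by
    have := card_nsmul_le_sum _ _ _ fun b (_ : b ∈ univ.erase b₀) => hc b
    rwa [card_erase_of_mem (mem_univ _), card_univ, nsmul_eq_mul,
      Nat.cast_sub (Fintype.card_pos_iff.2 ⟨b₀⟩), Nat.cast_one] at this
  have htotal :
      ∑ _a : ι, (Fintype.card ι - 1) * δ / 4 ≤ ∑ a, (binaryOfSigns H *ᵥ c) a ^ 2 := by
    rw [sum_const, card_univ, nsmul_eq_mul, sum_sq_binaryOfSigns_mulVec hH h₀]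
    have hN : (0 : ℝ) ≤ Fintype.card ι := Nat.cast_nonneg _
    nlinarith [mul_nonneg hN (sq_nonneg (∑ b, c b + c b₀))]
  obtain ⟨a, -, ha⟩ := exists_le_of_sum_le ⟨b₀, mem_univ _⟩ htotal
  exact ⟨a, ha⟩

end Hadamard

section Walsh

/-- `(-1) ^ ⟨a, b⟩` for `a b ∈ 𝔽₂ᵏ`, with `Bool` standing for `𝔽₂`. -/
noncomputable def walsh (k : ℕ) : Matrix (Fin k → Bool) (Fin k → Bool) ℝ :=
  of fun a b => ∏ i, if a i && b i then -1 else 1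

theorem walsh_apply_eq_one_or_neg_one (k : ℕ) (a b : Fin k → Bool) :
    walsh k a b = 1 ∨ walsh k a b = -1 := by
  refine mul_self_eq_one_iff.mp ?_
  rw [walsh, of_apply, ← prod_mul_distrib]
  exact prod_eq_one fun i _ => by split_ifs <;> norm_num

theorem walsh_apply_bot (k : ℕ) (a : Fin k → Bool) : walsh k a ⊥ = 1 := by
  simp [walsh]

theorem walsh_transpose_mul_self (k : ℕ) : (walsh k)ᵀ * walsh k = (2 ^ k : ℝ) • 1 := by
  ext b b'
  have hfactor : ∀ u v : Bool,
      ∑ t : Bool, (if t && u then (-1 : ℝ) else 1) * (if t && v then -1 else 1) =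
        if u = v then 2 else 0 := by
    intro u v
    cases u <;> cases v <;> norm_num
  simp only [mul_apply, transpose_apply, walsh, of_apply, ← prod_mul_distrib]
  rw [← Fintype.prod_sum fun i t =>
    (if t && b i then (-1 : ℝ) else 1) * (if t && b' i then -1 else 1)]
  simp only [hfactor, prod_ite_zero, prod_const, card_univ, Fintype.card_fin, Matrix.smul_apply,
    mem_univ, true_implies]
  split_ifs with h <;> simp [one_apply, funext_iff, h]

theorem exists_le_abs_binaryOfSigns_walsh_mulVec {k n : ℕ} (hn : n < 2 ^ (k + 1))
    {c : (Fin k → Bool) → ℝ} (hc : ∀ b, 1 / 4 ≤ |c b|) :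
    ∃ a, √(n - 1) / 16 ≤ |(binaryOfSigns (walsh k) *ᵥ c) a| := by
  have hH : (walsh k)ᵀ * walsh k = (Fintype.card (Fin k → Bool) : ℝ) • 1 := by
    simp [walsh_transpose_mul_self]
  obtain ⟨a, ha⟩ :=
    exists_le_sq_binaryOfSigns_mulVec hH (walsh_apply_bot k) (c := c) (δ := 1 / 16) fun b => by
      have := pow_le_pow_left₀ (by norm_num) (hc b) 2
      rw [sq_abs] at this
      linarith
  refine ⟨a, ?_⟩
  have hn' : (n : ℝ) + 1 ≤ 2 * 2 ^ k := by exact_mod_cast (pow_succ' 2 k).symm ▸ hn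
  simp only [Fintype.card_fun, Fintype.card_bool, Fintype.card_fin, Nat.cast_pow,
    Nat.cast_ofNat] at ha
  rw [div_le_iff₀ (by norm_num), Real.sqrt_le_iff]
  refine ⟨by positivity, ?_⟩
  rw [mul_pow, sq_abs]
  linarith [one_le_pow₀ (M₀ := ℝ) one_le_two (n := k)]

end Walsh

section Discrepancy

variable {ι κ : Type*} [Fintype κ]

/-- `δ ≤ wdisc_p(A)`, with the sup norm written out coordinatewise. -/
def WdiscLowerBound (p δ : ℝ) (A : Matrix ι κ ℝ) : Prop :=
  ∀ x : κ → ℝ, (∀ j, x j = 0 ∨ x j = 1) → ∃ i, δ ≤ |(A *ᵥ fun j => p - x j) i|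

theorem WdiscLowerBound.submatrix {ι' κ' : Type*} [Fintype κ'] {p δ : ℝ} {A : Matrix ι κ ℝ}
    (hA : WdiscLowerBound p δ A) {g : ι' → ι} (hg : Function.Surjective g) (e : κ' ≃ κ) :
    WdiscLowerBound p δ (A.submatrix g e) := by
  intro x hx
  obtain ⟨a, ha⟩ := hA (x ∘ e.symm) fun j => hx _
  obtain ⟨i, rfl⟩ := hg a
  exact ⟨i, by rwa [submatrix_mulVec_equiv]⟩

theorem submatrix_id_fst_mulVec {R τ : Type*} [NonUnitalNonAssocSemiring R] [Fintype τ]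
    (B : Matrix ι κ R) (v : κ × τ → R) :
    (B.submatrix id Prod.fst : Matrix ι (κ × τ) R) *ᵥ v = B *ᵥ fun b => ∑ s, v (b, s) := by
  ext a
  simp [mulVec, dotProduct, Fintype.sum_prod_type, mul_sum]

theorem exists_int_sum_eq_of_zero_or_one {α : Type*} (s : Finset α) {x : α → ℝ}
    (hx : ∀ j, x j = 0 ∨ x j = 1) : ∃ z : ℤ, ∑ j ∈ s, x j = z := by
  refine sum_induction x (fun y => ∃ z : ℤ, y = z) ?_ ⟨0, by simp⟩ fun j _ => ?_
  · rintro _ _ ⟨z, rfl⟩ ⟨z', rfl⟩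
    exact ⟨z + z', by push_cast; rfl⟩
  · rcases hx j with h | h
    · exact ⟨0, by simp [h]⟩
    · exact ⟨1, by simp [h]⟩

theorem WdiscLowerBound.of_repeat_columns {B : Matrix ι κ ℝ} {p ε δ : ℝ} {t : ℕ}
    (hfar : ∀ z : ℤ, ε ≤ |t * p - z|)
    (hB : ∀ c : κ → ℝ, (∀ b, ε ≤ |c b|) → ∃ a, δ ≤ |(B *ᵥ c) a|) :
    WdiscLowerBound p δ (B.submatrix id Prod.fst : Matrix ι (κ × Fin t) ℝ) := by
  intro x hx
  have hblock : ∀ b, ε ≤ |∑ s, (p - x (b, s))| := by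
    intro b
    obtain ⟨z, hz⟩ := exists_int_sum_eq_of_zero_or_one univ fun s => hx (b, s)
    simpa [sum_sub_distrib, hz, mul_comm] using hfar z
  simpa only [submatrix_id_fst_mulVec] using hB _ hblock

end Discrepancy

theorem quarter_le_abs_sub_int {r : ℝ} (h₁ : 1 / 4 ≤ r) (h₂ : r ≤ 3 / 4) (z : ℤ) :
    1 / 4 ≤ |r - z| := by
  rcases le_or_gt z 0 with hz | hz
  · have : (z : ℝ) ≤ 0 := by exact_mod_cast hz
    exact le_abs.mpr (Or.inl (by linarith))
  · have : (1 : ℝ) ≤ z := by exact_mod_cast hz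
    exact le_abs.mpr (Or.inr (by linarith))

theorem exists_nat_mul_far_from_int {p : ℝ} (hp₀ : 0 < p) (hp₁ : p < 1) :
    ∃ t : ℕ, 0 < t ∧ ∀ z : ℤ, 1 / 4 ≤ |t * p - z| := by
  wlog hp : p ≤ 1 / 2 generalizing p
  · obtain ⟨t, ht, hfar⟩ := this (sub_pos.2 hp₁) (by linarith) (by linarith)
    refine ⟨t, ht, fun z => ?_⟩
    convert hfar (t - z) using 1
    rw [← abs_neg]
    congr 1
    push_cast
    ring
  -- `t = ⌈1 / (4p)⌉` puts `t p` in `[1/4, 1/4 + p) ⊆ [1/4, 3/4]`.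
  have hq : 0 < 1 / (4 * p) := by positivity
  have hpq : 1 / (4 * p) * p = 1 / 4 := by field_simp
  refine ⟨⌈1 / (4 * p)⌉₊, Nat.ceil_pos.2 hq, quarter_le_abs_sub_int ?_ ?_⟩
  · nlinarith [Nat.le_ceil (1 / (4 * p))]
  · nlinarith [Nat.ceil_lt_add_one hq.le]

/-- For every real `p` with `0 < p < 1` and every positive integer `n`,
there exist a positive integer `m` and a matrix `A ∈ {0,1}^{n×m}` such that for every
vector `x ∈ {0,1}^m`, `‖A(p·𝟏 − x)‖_∞ ≥ √(n−1)/16`.  (Since `n > 0`, the `∞`-norm bound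
is expressed as the existence of a coordinate of absolute value at least `√(n−1)/16`.)
Equivalently, `wdisc^max_p(n) ≥ √(n−1)/16`. -/
theorem wdisc_lower_bound (p : ℝ) (hp0 : 0 < p) (hp1 : p < 1) (n : ℕ) (hn : 0 < n) :
    ∃ (m : ℕ), 0 < m ∧ ∃ A : Matrix (Fin n) (Fin m) ℝ,
      (∀ i j, A i j = 0 ∨ A i j = 1) ∧
      ∀ x : Fin m → ℝ, (∀ j, x j = 0 ∨ x j = 1) →
        ∃ i : Fin n,
          Real.sqrt ((n : ℝ) - 1) / 16 ≤ |A.mulVec (fun j => p - x j) i| := by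
  obtain ⟨t, ht, hfar⟩ := exists_nat_mul_far_from_int hp0 hp1
  set k := Nat.log 2 n
  have hB := WdiscLowerBound.of_repeat_columns hfar fun c hc =>
    exists_le_abs_binaryOfSigns_walsh_mulVec (Nat.lt_pow_succ_log_self one_lt_two n) hc
  obtain ⟨f⟩ := Function.Embedding.nonempty_of_card_le (α := Fin k → Bool) (β := Fin n)
    (by simpa using Nat.pow_log_le_self 2 hn.ne')
  have := Fin.pos_iff_nonempty.1 hn
  exact ⟨_, Fintype.card_pos_iff.2 ⟨(⊥, ⟨0, ht⟩)⟩, _,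
    fun i j => binaryOfSigns_apply_eq_zero_or_one (walsh_apply_eq_one_or_neg_one k _ _),
    hB.submatrix (Function.invFun_surjective f.injective) (Fintype.equivFin _).symm⟩
end

section
/- For all positive integers n and k with k ≥ 2, there exist a positive integer m and a matrix A with entries in {0,1}, having n rows and m columns, such that for every coloring χ: [m] → [k] there exists a color s ∈ [k] with ‖A((1/k)·𝟏 − 𝟏(χ⁻¹(s)))‖_∞ ≥ √(n−1)/16. Equivalently, the maximum k-color discrepancy satisfies exdisc(n, k) ≥ √(n−1)/16. -/
/-!
Let `t = ⌊log₂ n⌋` and let `H a p = (-1)^(a ⬝ p)` be the Walsh–Hadamard matrix on `𝔽₂^t`: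
it satisfies `Hᵀ H = 2^t • 1` and its column `p = 0` is all ones. Take the rows of `(1 + H) / 2`,
repeat each column `r = ⌊k/2⌋` times, and pad with zero rows.

Given a colouring, let `x s p = r/k - #{copies of column p of colour s}`. For fixed `p` these counts
are integers summing to `r`, so `∑ₛ (x s p)² ≥ r - r²/k ≥ k/8`; hence some colour `s` has
`∑_{p ≠ 0} (x s p)² ≥ (2^t - 1)/8`. By orthogonality, the mean over the rows `a` of
`((1 + H)/2 · x)_a²` is `((σ + x₀)² + ∑_{p ≠ 0} x_p²)/4` with `σ = ∑ x_p`, so some row has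
`|((1 + H)/2 · x)_a| ≥ √(2^t - 1)/8 ≥ √(n - 1)/16`.
-/

open Finset Matrix

namespace ExdiscLowerBound

noncomputable def signChar : AddChar (ZMod 2) ℝ :=
  AddChar.zmodChar 2 (by norm_num : (-1 : ℝ) ^ 2 = 1)

theorem signChar_one : signChar 1 = -1 := by
  simp [signChar, AddChar.zmodChar_apply, ZMod.val_one]

theorem signChar_eq_one_or_eq_neg_one (x : ZMod 2) : signChar x = 1 ∨ signChar x = -1 := by
  rcases (by decide : ∀ x : ZMod 2, x = 0 ∨ x = 1) x with rfl | rfl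
  · exact .inl (AddChar.map_zero_eq_one _)
  · exact .inr signChar_one

theorem sum_signChar_dotProduct {t : ℕ} (d : Fin t → ZMod 2) :
    ∑ a, signChar (a ⬝ᵥ d) = if d = 0 then (Fintype.card (Fin t → ZMod 2) : ℝ) else 0 := by
  split_ifs with hd
  · simp [hd]
  obtain ⟨i, hi⟩ := Function.ne_iff.mp hd
  have hdi : d i = 1 := (by decide : ∀ x : ZMod 2, x ≠ 0 → x = 1) _ hi
  let φ : AddChar (Fin t → ZMod 2) ℝ :=
    signChar.compAddMonoidHom (AddMonoidHom.mk' (· ⬝ᵥ d) fun a b => add_dotProduct a b d)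
  have hφ : φ ≠ 0 := fun h => by
    have := DFunLike.congr_fun h (Pi.single i 1)
    norm_num [φ, single_dotProduct, hdi, signChar_one] at this
  exact AddChar.sum_eq_zero_iff_ne_zero.mpr hφ

noncomputable def walsh (t : ℕ) : Matrix (Fin t → ZMod 2) (Fin t → ZMod 2) ℝ :=
  of fun a p => signChar (a ⬝ᵥ p)

theorem walsh_apply_zero_right {t : ℕ} (a : Fin t → ZMod 2) : walsh t a 0 = 1 := by
  simp [walsh]

theorem transpose_walsh_mul_walsh (t : ℕ) :
    (walsh t)ᵀ * walsh t = (Fintype.card (Fin t → ZMod 2) : ℝ) • 1 := by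
  ext p q
  have hpq : p + q = 0 ↔ p = q := by
    rw [add_eq_zero_iff_eq_neg, funext_iff, funext_iff]
    simp [ZMod.neg_eq_self_mod_two]
  simp only [mul_apply, transpose_apply, walsh, of_apply, ← AddChar.map_add_eq_mul,
    ← dotProduct_add, sum_signChar_dotProduct, hpq, Matrix.smul_apply, one_apply, smul_eq_mul,
    mul_ite, mul_one, mul_zero]

theorem exists_sum_erase_sq_div_four_le_mulVec_sq {α β : Type*} [Fintype α] [Nonempty α]
    [Fintype β] [DecidableEq β] (H : Matrix α β ℝ) (hH : Hᵀ * H = (Fintype.card α : ℝ) • 1) {p₀ : β}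
    (hp₀ : ∀ a, H a p₀ = 1) (x : β → ℝ) :
    ∃ a, (∑ p ∈ univ.erase p₀, x p ^ 2) / 4 ≤ (of (fun a p => (1 + H a p) / 2) *ᵥ x) a ^ 2 := by
  set N : ℝ := (Fintype.card α : ℝ)
  set y := H *ᵥ x
  set σ := ∑ p, x p
  set S := ∑ p ∈ univ.erase p₀, x p ^ 2
  have hy : ∀ a, (of (fun a p => (1 + H a p) / 2) *ᵥ x) a = (σ + y a) / 2 := fun a => by
    simp only [mulVec, dotProduct, of_apply, y, σ, add_mul, sum_add_distrib, div_mul_eq_mul_div,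
      ← sum_div, one_mul]
  have hHy : Hᵀ *ᵥ y = N • x := by rw [mulVec_mulVec, hH, smul_mulVec, one_mulVec]
  have hsum : ∑ a, y a = N * x p₀ := by
    simpa [mulVec, dotProduct, hp₀] using congrFun hHy p₀
  have hsumsq : ∑ a, y a ^ 2 = N * ∑ p, x p ^ 2 := by
    have : y ⬝ᵥ y = N * (x ⬝ᵥ x) := by
      rw [dotProduct_mulVec, ← mulVec_transpose, hHy, smul_dotProduct, smul_eq_mul,
        dotProduct_comm]
    simpa [dotProduct, sq] using this
  have hmean : ∑ _a : α, S / 4 ≤ ∑ a, ((σ + y a) / 2) ^ 2 := by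
    have hsplit : ∑ p, x p ^ 2 = x p₀ ^ 2 + S := (add_sum_erase _ _ (mem_univ p₀)).symm
    have : ∑ a, ((σ + y a) / 2) ^ 2 = N * ((σ + x p₀) ^ 2 + S) / 4 := by
      simp only [add_div, add_sq, div_pow, sum_add_distrib, ← sum_div, ← mul_sum,
        hsum, hsumsq, hsplit, sum_const, card_univ, nsmul_eq_mul, N]
      ring
    rw [this, sum_const, card_univ, nsmul_eq_mul]
    have : 0 ≤ N * (σ + x p₀) ^ 2 := by positivity
    linarith
  obtain ⟨a, -, ha⟩ := exists_le_of_sum_le univ_nonempty hmean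
  exact ⟨a, by rwa [hy]⟩

noncomputable def colorDev {β : Type*} {k : ℕ} (χ : β → Fin k) (s : Fin k) : β → ℝ :=
  fun j => 1 / (k : ℝ) - if χ j = s then 1 else 0

-- `disc(A, k) ≥ D`, for rows and columns indexed by arbitrary types
def DiscAtLeast {α β : Type*} [Fintype β] (A : Matrix α β ℝ) (k : ℕ) (D : ℝ) : Prop :=
  ∀ χ : β → Fin k, ∃ s i, D ≤ |(A *ᵥ colorDev χ s) i|

namespace DiscAtLeast

variable {α α' β γ : Type*} [Fintype β] [Fintype γ] {A : Matrix α β ℝ} {k : ℕ} {D : ℝ}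

theorem mono (h : DiscAtLeast A k D) {D' : ℝ} (hD : D' ≤ D) : DiscAtLeast A k D' := fun χ =>
  let ⟨s, i, hi⟩ := h χ; ⟨s, i, hD.trans hi⟩

theorem of_rows {A' : Matrix α' β ℝ} (h : DiscAtLeast A k D) (hrows : ∀ i, ∃ i', A' i' = A i) :
    DiscAtLeast A' k D := fun χ => by
  obtain ⟨s, i, hi⟩ := h χ
  obtain ⟨i', hi'⟩ := hrows i
  exact ⟨s, i', by simpa only [mulVec, hi'] using hi⟩

theorem submatrix_equiv (h : DiscAtLeast A k D) (e : γ ≃ β) :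
    DiscAtLeast (A.submatrix id e) k D := fun χ => by
  obtain ⟨s, i, hi⟩ := h (χ ∘ e.symm)
  refine ⟨s, i, ?_⟩
  rwa [submatrix_mulVec_equiv]

end DiscAtLeast

theorem exists_fin_discAtLeast {α β : Type*} [Fintype α] [Fintype β] {A : Matrix α β ℝ} {k : ℕ}
    {D : ℝ} {n : ℕ} (hn : Fintype.card α ≤ n) (hA : ∀ i j, A i j = 0 ∨ A i j = 1)
    (h : DiscAtLeast A k D) :
    ∃ A' : Matrix (Fin n) (Fin (Fintype.card β)) ℝ,
      (∀ i j, A' i j = 0 ∨ A' i j = 1) ∧ DiscAtLeast A' k D := by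
  classical
  obtain ⟨f⟩ := Function.Embedding.nonempty_of_card_le (hn.trans_eq (Fintype.card_fin n).symm)
  let B : α → Fin (Fintype.card β) → ℝ := A.submatrix id (Fintype.equivFin β).symm
  refine ⟨of (Function.extend f B 0), fun i j => ?_, (h.submatrix_equiv _).of_rows fun a =>
    ⟨f a, f.injective.extend_apply B 0 a⟩⟩
  by_cases hi : ∃ a, f a = i
  · obtain ⟨a, rfl⟩ := hi
    rw [of_apply, f.injective.extend_apply]
    exact hA _ _
  · simp [Function.extend_apply' _ _ _ hi]

theorem sum_sub_sq_div_card_le_sum_sq_mean_sub {ι : Type*} [Fintype ι] [Nonempty ι]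
    (c : ι → ℕ) :
    (∑ i, c i : ℝ) - (∑ i, c i : ℝ) ^ 2 / Fintype.card ι ≤
      ∑ i, ((∑ j, c j : ℝ) / Fintype.card ι - c i) ^ 2 := by
  set r : ℝ := ∑ i, (c i : ℝ)
  have hk : (Fintype.card ι : ℝ) ≠ 0 := Nat.cast_ne_zero.mpr Fintype.card_ne_zero
  have hexpand :
      ∑ i, (r / Fintype.card ι - c i) ^ 2 = ∑ i, (c i : ℝ) ^ 2 - r ^ 2 / Fintype.card ι := by
    simp only [sub_sq, sum_add_distrib, sum_sub_distrib, ← mul_sum, sum_const, card_univ,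
      nsmul_eq_mul]
    field_simp
    ring
  have hsq : r ≤ ∑ i, (c i : ℝ) ^ 2 := sum_le_sum fun i _ => by
    exact_mod_cast Nat.le_self_pow two_ne_zero (c i)
  linarith

theorem div_eight_le_sub_sq_div {k : ℕ} (hk : 2 ≤ k) :
    (k : ℝ) / 8 ≤ ((k / 2 : ℕ) : ℝ) - ((k / 2 : ℕ) : ℝ) ^ 2 / k := by
  set r := k / 2
  have hr1 : (1 : ℝ) ≤ r := by exact_mod_cast (by omega : 1 ≤ r)
  have h2r : 2 * (r : ℝ) ≤ k := by exact_mod_cast (by omega : 2 * r ≤ k)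
  have h2r1 : (k : ℝ) ≤ 2 * r + 1 := by exact_mod_cast (by omega : k ≤ 2 * r + 1)
  have hkpos : (0 : ℝ) < k := by linarith
  rw [div_le_iff₀ (by norm_num), ← sub_nonneg]
  have : ((r : ℝ) - r ^ 2 / k) * 8 - k = (8 * r * (k - r) - k ^ 2) / k := by
    field_simp
  rw [this]
  apply div_nonneg _ hkpos.le
  nlinarith

theorem div_eight_le_sum_sq_sum_colorDev {k : ℕ} (hk : 2 ≤ k) (χ : Fin (k / 2) → Fin k) :
    (k : ℝ) / 8 ≤ ∑ s, (∑ u, colorDev χ s u) ^ 2 := by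
  classical
  have : Nonempty (Fin k) := ⟨⟨0, by omega⟩⟩
  set c : Fin k → ℕ := fun s => #{u | χ u = s}
  have hc : ∑ s, c s = k / 2 := by
    simpa [c] using (card_eq_sum_card_fiberwise (s := univ) fun u _ => mem_univ (χ u)).symm
  have hdev : ∀ s, ∑ u, colorDev χ s u = ((k / 2 : ℕ) : ℝ) / k - c s := fun s => by
    simp [colorDev, c, sum_sub_distrib, div_eq_mul_inv]
  have hmean := sum_sub_sq_div_card_le_sum_sq_mean_sub c
  rw [Fintype.card_fin, ← Nat.cast_sum, hc] at hmean
  simpa only [hdev] using (div_eight_le_sub_sq_div hk).trans hmean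

noncomputable def walsh01 (t : ℕ) : Matrix (Fin t → ZMod 2) (Fin t → ZMod 2) ℝ :=
  of fun a p => (1 + walsh t a p) / 2

theorem walsh01_eq_zero_or_eq_one {t : ℕ} (a p : Fin t → ZMod 2) :
    walsh01 t a p = 0 ∨ walsh01 t a p = 1 := by
  rcases signChar_eq_one_or_eq_neg_one (a ⬝ᵥ p) with h | h <;> simp [walsh01, walsh, h]

theorem submatrix_id_fst_mulVec {α β γ : Type*} [Fintype β] [Fintype γ] (B : Matrix α β ℝ)
    (w : β × γ → ℝ) : B.submatrix id Prod.fst *ᵥ w = B *ᵥ fun p => ∑ u, w (p, u) := by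
  ext a
  simp [mulVec, dotProduct, Fintype.sum_prod_type, mul_sum]

theorem discAtLeast_walsh01_submatrix_fst {t k : ℕ} (hk : 2 ≤ k) :
    DiscAtLeast ((walsh01 t).submatrix id (Prod.fst : _ × Fin (k / 2) → _)) k
      (√(2 ^ t - 1) / 8) := by
  intro χ
  set x : Fin k → (Fin t → ZMod 2) → ℝ := fun s p => ∑ u, colorDev χ s (p, u)
  have hcard : (#(univ.erase (0 : Fin t → ZMod 2)) : ℝ) = 2 ^ t - 1 := by
    rw [card_erase_of_mem (mem_univ 0), card_univ, Nat.cast_sub Fintype.card_pos]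
    simp [ZMod.card]
  have htotal : ∑ _s : Fin k, ((2 : ℝ) ^ t - 1) / 8 ≤ ∑ s, ∑ p ∈ univ.erase 0, x s p ^ 2 :=
    calc ∑ _s : Fin k, ((2 : ℝ) ^ t - 1) / 8 = ∑ _p ∈ univ.erase 0, (k : ℝ) / 8 := by
          simp only [sum_const, hcard, card_univ, Fintype.card_fin, nsmul_eq_mul]
          ring
      _ ≤ ∑ p ∈ univ.erase 0, ∑ s, x s p ^ 2 :=
          sum_le_sum fun p _ => div_eight_le_sum_sq_sum_colorDev hk fun u => χ (p, u)
      _ = ∑ s, ∑ p ∈ univ.erase 0, x s p ^ 2 := sum_comm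
  obtain ⟨s, -, hs⟩ := exists_le_of_sum_le (univ_nonempty_iff.mpr ⟨⟨0, by omega⟩⟩) htotal
  obtain ⟨a, ha⟩ := exists_sum_erase_sq_div_four_le_mulVec_sq (walsh t)
    (transpose_walsh_mul_walsh t) walsh_apply_zero_right (x s)
  refine ⟨s, a, ?_⟩
  rw [submatrix_id_fst_mulVec, div_le_iff₀ (by norm_num), Real.sqrt_le_left (by positivity),
    mul_pow, sq_abs]
  change _ ≤ ((of fun a p => (1 + walsh t a p) / 2) *ᵥ x s) a ^ 2 * 8 ^ 2
  linarith

theorem sqrt_sub_one_div_sixteen_le {n : ℕ} (hn : n ≠ 0) :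
    √((n : ℝ) - 1) / 16 ≤ √(2 ^ Nat.log 2 n - 1) / 8 := by
  have hlt : (n : ℝ) + 1 ≤ 2 * 2 ^ Nat.log 2 n := by
    exact_mod_cast pow_succ' 2 (Nat.log 2 n) ▸ Nat.lt_pow_succ_log_self one_lt_two n
  have hle : (2 : ℝ) ^ Nat.log 2 n ≤ n := by exact_mod_cast Nat.pow_log_le_self 2 hn
  calc √((n : ℝ) - 1) / 16 ≤ √(2 ^ 2 * (2 ^ Nat.log 2 n - 1)) / 16 := by gcongr; linarith
    _ = √(2 ^ Nat.log 2 n - 1) / 8 := by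
      rw [Real.sqrt_mul (by norm_num), Real.sqrt_sq (by norm_num)]
      ring

end ExdiscLowerBound

open ExdiscLowerBound

/-- For all positive integers `n` and `k ≥ 2`, there exist a positive
integer `m` and a matrix `A ∈ {0,1}^{n×m}` such that for every coloring `χ : [m] → [k]`
there exists a color `s` with `‖A((1/k)·𝟏 − 𝟏(χ⁻¹(s)))‖_∞ ≥ √(n−1)/16`.  (Since `n > 0`,
the `∞`-norm bound is expressed as the existence of a coordinate of absolute value at
least `√(n−1)/16`.)  Equivalently, `exdisc(n, k) ≥ √(n−1)/16`. -/
theorem exdisc_lower_bound (n k : ℕ) (hn : 0 < n) (hk : 2 ≤ k) :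
    ∃ (m : ℕ), 0 < m ∧ ∃ A : Matrix (Fin n) (Fin m) ℝ,
      (∀ i j, A i j = 0 ∨ A i j = 1) ∧
      ∀ χ : Fin m → Fin k, ∃ s : Fin k, ∃ i : Fin n,
        Real.sqrt ((n : ℝ) - 1) / 16 ≤
          |A.mulVec (fun j => 1 / (k : ℝ) - if χ j = s then 1 else 0) i| := by
  set t := Nat.log 2 n
  have hrows : Fintype.card (Fin t → ZMod 2) ≤ n := by
    simpa [ZMod.card] using Nat.pow_log_le_self 2 hn.ne'
  obtain ⟨A, hA01, hA⟩ := exists_fin_discAtLeast hrows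
    (fun _ _ => walsh01_eq_zero_or_eq_one _ _) (discAtLeast_walsh01_submatrix_fst (t := t) hk)
  refine ⟨_, Fintype.card_pos_iff.mpr ⟨(0, ⟨0, by omega⟩)⟩, A, hA01, ?_⟩
  exact hA.mono (sqrt_sub_one_div_sixteen_le hn.ne')
end

section
/- For every positive integer n that is a power of two, there exists a matrix W ∈ {0,1}^{n×n} such that for all z ∈ ℝ^n, ‖Wz‖₂² ≥ (n/4)·(∑_{i=2}^n z_i²), i.e., the squared Euclidean norm of Wz is at least n/4 times the sum of the squares of all coordinates of z except the first. -/
/-!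
Let `H` be a Hadamard matrix of order `n` whose first column is all ones (a Sylvester
matrix of order `2 ^ t`), and `W = (J + H) / 2`, a `0/1` matrix. With `s = ∑ zᵢ` we get
`Wz = (s • 1 + Hz) / 2`, and `HᵀH = n • 1` gives `∑ (Hz)ᵢ = n z₀` and
`‖Hz‖² = n ‖z‖²`, so `‖Wz‖² = n / 4 * ((s + z₀) ^ 2 + ∑_{i ≠ 0} zᵢ ^ 2)`.
-/

open Finset Matrix
open scoped Kronecker

namespace Matrix

variable {ι : Type*} [Fintype ι] [DecidableEq ι] {H : Matrix ι ι ℝ}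

theorem IsHadamard.vecMul_mulVec_self (hH : H.IsHadamard) (z : ι → ℝ) :
    (H *ᵥ z) ᵥ* H = (Fintype.card ι : ℝ) • z := by
  rw [← mulVec_transpose, ← conjTranspose_eq_transpose_of_trivial, mulVec_mulVec,
    hH.conjTranspose_mul, smul_mulVec, one_mulVec]

theorem IsHadamard.one_vecMul (hH : H.IsHadamard) {i₀ : ι} (hcol : ∀ a, H a i₀ = 1) :
    1 ᵥ* H = (Fintype.card ι : ℝ) • Pi.single i₀ 1 := by
  have : (1 : ι → ℝ) = H *ᵥ Pi.single i₀ 1 := by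
    ext a; simp [mulVec_single, hcol]
  rw [this, hH.vecMul_mulVec_self]

noncomputable def zeroOneOfSign (H : Matrix ι ι ℝ) : Matrix ι ι ℝ :=
  of fun a b => (1 + H a b) / 2

theorem IsHadamard.zeroOneOfSign_apply_eq_zero_or_one (hH : H.IsHadamard) (a b : ι) :
    H.zeroOneOfSign a b = 0 ∨ H.zeroOneOfSign a b = 1 := by
  rcases Unitary.mem_iff_eq_one_or_eq_neg_one.mp (hH.apply_mem a b) with h | h <;>
    simp [zeroOneOfSign, h]

theorem IsHadamard.sum_sq_zeroOneOfSign_mulVec (hH : H.IsHadamard) {i₀ : ι}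
    (hcol : ∀ a, H a i₀ = 1) (z : ι → ℝ) :
    ∑ a, (H.zeroOneOfSign *ᵥ z) a ^ 2 =
      Fintype.card ι / 4 * ((∑ b, z b + z i₀) ^ 2 + ∑ b ∈ univ.erase i₀, z b ^ 2) := by
  set N : ℝ := (Fintype.card ι : ℝ)
  set s := ∑ b, z b
  have hW : ∀ a, (H.zeroOneOfSign *ᵥ z) a = (s + (H *ᵥ z) a) / 2 := by
    intro a
    simp only [zeroOneOfSign, mulVec, dotProduct, of_apply, s, add_div, sum_div,
      ← sum_add_distrib]
    exact sum_congr rfl fun b _ => by ring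
  have hsum : ∑ a, (H *ᵥ z) a = N * z i₀ := by
    simpa [dotProduct_mulVec, hH.one_vecMul hcol, N] using (one_dotProduct (H *ᵥ z)).symm
  have hsq : ∑ a, (H *ᵥ z) a ^ 2 = N * ∑ b, z b ^ 2 := by
    have := dotProduct_mulVec (H *ᵥ z) H z
    rw [hH.vecMul_mulVec_self, smul_dotProduct, smul_eq_mul] at this
    simpa only [dotProduct, sq] using this
  have hsplit : ∑ b, z b ^ 2 = z i₀ ^ 2 + ∑ b ∈ univ.erase i₀, z b ^ 2 :=
    (add_sum_erase _ _ (mem_univ i₀)).symm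
  have hcard : ∑ _a : ι, s ^ 2 = N * s ^ 2 := by simp [N]
  calc ∑ a, (H.zeroOneOfSign *ᵥ z) a ^ 2
      = (∑ _a : ι, s ^ 2 + 2 * s * ∑ a, (H *ᵥ z) a + ∑ a, (H *ᵥ z) a ^ 2) / 4 := by
        simp only [hW, mul_sum, ← sum_add_distrib, sum_div]
        exact sum_congr rfl fun a _ => by ring
    _ = _ := by rw [hcard, hsum, hsq, hsplit]; ring

theorem isHadamard_sylvester_two : (!![1, 1; 1, -1] : Matrix (Fin 2) (Fin 2) ℝ).IsHadamard := by
  refine ⟨fun i j => ?_, ?_, ?_⟩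
  · fin_cases i <;> fin_cases j <;> simp [Unitary.mem_iff_eq_one_or_eq_neg_one]
  all_goals
    ext i j
    fin_cases i <;> fin_cases j <;> norm_num [mul_apply, Fin.sum_univ_two]

theorem exists_isHadamard_two_pow (t : ℕ) :
    ∃ H : Matrix (Fin (2 ^ t)) (Fin (2 ^ t)) ℝ, H.IsHadamard ∧ ∀ a, H a 0 = 1 := by
  induction t with
  | zero =>
    have : Subsingleton (Fin (2 ^ 0)) := inferInstanceAs (Subsingleton (Fin 1))
    refine ⟨of fun _ _ => 1, ⟨fun i j => by simp, ?_, ?_⟩, fun a => rfl⟩ <;>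
      ext i j <;> simp [mul_apply, Subsingleton.elim i j]
  | succ t ih =>
    obtain ⟨H, hH, hcol⟩ := ih
    let e : Fin 2 × Fin (2 ^ t) ≃ Fin (2 ^ (t + 1)) :=
      finProdFinEquiv.trans (finCongr (pow_succ' 2 t).symm)
    have he : e.symm 0 = (0, 0) := e.symm_apply_eq.mpr (by ext; simp [e])
    refine ⟨reindex e e (!![1, 1; 1, -1] ⊗ₖ H),
      (isHadamard_sylvester_two.kronecker hH).reindex e e, fun a => ?_⟩
    rw [reindex_apply, submatrix_apply, he, kroneckerMap_apply, hcol]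
    obtain ⟨i, j⟩ := e.symm a
    fin_cases i <;> simp

end Matrix

/-- For every positive integer `n` that is a power of two, there exists a
matrix `W ∈ {0,1}^{n×n}` such that for all `z ∈ ℝ^n`,
`‖Wz‖₂² ≥ (n/4) · (∑_{i=2}^n z_i²)`, i.e. the squared Euclidean norm of `Wz` is at least
`n/4` times the sum of the squares of all coordinates of `z` except the first. -/
theorem hadamard_discrepancy (n t : ℕ) (hn : n = 2 ^ t) :
    ∃ W : Matrix (Fin n) (Fin n) ℝ,
      (∀ i j, W i j = 0 ∨ W i j = 1) ∧
      ∀ z : Fin n → ℝ,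
        (n : ℝ) / 4 * (∑ i ∈ Finset.univ.filter (fun i : Fin n => (i : ℕ) ≠ 0), z i ^ 2)
          ≤ ∑ i : Fin n, (W.mulVec z i) ^ 2 := by
  subst hn
  obtain ⟨H, hH, hcol⟩ := exists_isHadamard_two_pow t
  refine ⟨H.zeroOneOfSign, hH.zeroOneOfSign_apply_eq_zero_or_one, fun z => ?_⟩
  have hfilter : univ.filter (fun i : Fin (2 ^ t) => (i : ℕ) ≠ 0) = univ.erase 0 := by
    ext i
    simp only [mem_filter, mem_univ, true_and, mem_erase, and_true, ne_eq, Fin.ext_iff,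
      Fin.val_zero]
  rw [hfilter, hH.sum_sq_zeroOneOfSign_mulVec hcol, Fintype.card_fin]
  exact mul_le_mul_of_nonneg_left (le_add_of_nonneg_left (sq_nonneg _)) (by positivity)
end

section
/- Let A = (A₁,...,A_k) be a PROPc allocation in a group fair division instance with m items in which every item has utility at most 1 for every agent. Suppose some group i contains two agents j and j′ whose utilities are complements of each other, i.e., u^{(i,j′)}(g) = 1 − u^{(i,j)}(g) for every item g. Then |u^{(i,j)}(A_i) − u^{(i,j)}(G)/k| ≤ c + max(0, |A_i| − m/k). -/
open Finset

/-- The bundle of group `i` under the allocation `χ : [m] → [k]` (an allocation is a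
partition of the items `[m]` into `k` bundles, encoded by assigning each item a group). -/
def bundle {k m : ℕ} (χ : Fin m → Fin k) (i : Fin k) : Finset (Fin m) :=
  Finset.univ.filter (fun g => χ g = i)

/-- An allocation `χ` is proportional up to `c` goods (PROP`c`) for the additive
utilities `u` (of `k` groups of sizes `ns`, over `m` items): for all `i ∈ [k]` and
`j ∈ [n_i]` there exists `B ⊆ G \ A_i` with `|B| ≤ c` such that
`u^{(i,j)}(A_i) ≥ u^{(i,j)}(G)/k − u^{(i,j)}(B)`. -/
def IsProp {k m : ℕ} (ns : Fin k → ℕ) (u : ∀ i : Fin k, Fin (ns i) → Fin m → ℝ)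
    (χ : Fin m → Fin k) (c : ℝ) : Prop :=
  ∀ (i : Fin k) (j : Fin (ns i)), ∃ B : Finset (Fin m),
    (∀ g ∈ B, g ∉ bundle χ i) ∧ (B.card : ℝ) ≤ c ∧
    ∑ g ∈ bundle χ i, u i j g ≥ (∑ g, u i j g) / (k : ℝ) - ∑ g ∈ B, u i j g

/-- Lemma: from PROP to discrepancy. Let `χ` be a PROP`c` allocation in
a group fair division instance with `m` items in which every item has utility in `[0,1]`
for every agent. If some group `i` contains two agents `j, j'` with complementary
utilities (`u^{(i,j')}(g) = 1 − u^{(i,j)}(g)` for every item `g`), then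
`|u^{(i,j)}(A_i) − u^{(i,j)}(G)/k| ≤ c + max(0, |A_i| − m/k)`. -/
theorem prop_to_disc (k m : ℕ) (ns : Fin k → ℕ)
    (u : ∀ i : Fin k, Fin (ns i) → Fin m → ℝ)
    (hu0 : ∀ i j g, 0 ≤ u i j g) (hu1 : ∀ i j g, u i j g ≤ 1)
    (c : ℝ) (χ : Fin m → Fin k) (hprop : IsProp ns u χ c)
    (i : Fin k) (j j' : Fin (ns i))
    (hcomp : ∀ g, u i j' g = 1 - u i j g) :
    |∑ g ∈ bundle χ i, u i j g - (∑ g, u i j g) / (k : ℝ)|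
      ≤ c + max 0 (((bundle χ i).card : ℝ) - (m : ℝ) / (k : ℝ)) := by
  obtain ⟨B, _, hBc, hB⟩ := hprop i j
  obtain ⟨B', _, hB'c, hB'⟩ := hprop i j'
  have hsumB : ∑ g ∈ B, u i j g ≤ c := by
    calc ∑ g ∈ B, u i j g ≤ ∑ _g ∈ B, (1 : ℝ) :=
          Finset.sum_le_sum fun g _ => hu1 i j g
      _ = (B.card : ℝ) := by simp
      _ ≤ c := hBc
  have hsumB' : ∑ g ∈ B', u i j' g ≤ c := by
    calc ∑ g ∈ B', u i j' g ≤ ∑ _g ∈ B', (1 : ℝ) :=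
          Finset.sum_le_sum fun g _ => by rw [hcomp]; linarith [hu0 i j g]
      _ = (B'.card : ℝ) := by simp
      _ ≤ c := hB'c
  -- rewrite sums of j' in terms of j
  have e1 : ∑ g ∈ bundle χ i, u i j' g = ((bundle χ i).card : ℝ) - ∑ g ∈ bundle χ i, u i j g := by
    simp [hcomp, Finset.sum_sub_distrib]
  have e2 : ∑ g, u i j' g = (m : ℝ) - ∑ g, u i j g := by
    simp [hcomp, Finset.sum_sub_distrib]
  have h0c : (0:ℝ) ≤ c := le_trans (Nat.cast_nonneg _) hBc
  rw [e1, e2] at hB'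
  rw [abs_le]
  constructor
  · have hmax : (0:ℝ) ≤ max 0 (((bundle χ i).card : ℝ) - (m : ℝ) / (k : ℝ)) := le_max_left _ _
    linarith [hB]
  · have hmax : ((bundle χ i).card : ℝ) - (m : ℝ) / (k : ℝ)
        ≤ max 0 (((bundle χ i).card : ℝ) - (m : ℝ) / (k : ℝ)) := le_max_right _ _
    rcases Nat.eq_zero_or_pos k with hk | hk
    · exfalso; exact absurd i.2 (by omega)
    have hkpos : (0:ℝ) < k := by exact_mod_cast hk
    have : ((m : ℝ) - ∑ g, u i j g) / (k : ℝ) = (m:ℝ)/k - (∑ g, u i j g)/k := by ring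
    rw [this] at hB'
    linarith [hsumB', hB']
end

section
/- Let k ≥ 2 and n₁ ≥ n₂ ≥ ... ≥ n_k ≥ 1 be integers, let i* ∈ [k], and let Δ be a real number such that there exist m ∈ ℕ and a matrix A ∈ [0,1]^{n′×m}, with n′ = ⌊n_{i*}/2⌋, whose (1/k)-weighted discrepancy satisfies wdisc_{1/k}(A) ≥ Δ. Then for every real c < (i*/k)·Δ, there exists a group fair division instance with group sizes n₁,...,n_k (with all item utilities in [0,1]) that admits no PROPc allocation. Consequently, c^PROP(n₁,...,n_k) ≥ max over i* ∈ [k] of (i*/k)·wdisc^max_{1/k}(⌊n_{i*}/2⌋). -/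
/-!
Every agent in a group after `i*` values each item at 1, and each of the first `i*` groups
contains, for every row of `A`, an agent valuing items by that row and one valuing them by its
complement. Under a PROPc allocation the groups after `i*` each receive at least `m/k - c`
items, so one of the first `i*` groups receives at most `m/k + (k - i*) c / i*`. Taking `x` to be
the indicator of its bundle, `wdisc_{1/k}(A) ≥ Δ` gives a row in which the bundle deviates from
the `1/k` share by at least `Δ`. A shortfall contradicts PROPc for the row agent; an excess,
combined with the bound on the bundle size, contradicts it for the complement agent. Either way
`i* Δ ≤ k c`.
-/

open Finset

/-- The `∞`-norm of a vector: the maximum absolute value of a coordinate. -/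
noncomputable def infNorm {n : ℕ} (v : Fin n → ℝ) : ℝ := ⨆ i, |v i|

/-- The `p`-weighted discrepancy of a matrix `A ∈ [0,1]^{n×m}`:
`wdisc_p(A) = min over x ∈ {0,1}^m of ‖A(p·𝟏 − x)‖_∞`. -/
noncomputable def wdisc (p : ℝ) {n m : ℕ} (A : Matrix (Fin n) (Fin m) ℝ) : ℝ :=
  ⨅ x : Fin m → Fin 2, infNorm (A.mulVec (fun j => p - ((x j : ℕ) : ℝ)))

lemma exists_le_abs_of_le_infNorm {n : ℕ} {v : Fin n → ℝ} {Δ : ℝ} (hΔ : 0 < Δ)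
    (h : Δ ≤ infNorm v) : ∃ r, Δ ≤ |v r| := by
  rcases isEmpty_or_nonempty (Fin n) with hn | hn
  · simp [infNorm, Real.iSup_of_isEmpty] at h
    linarith
  · obtain ⟨r, hr⟩ := exists_eq_ciSup_of_finite (f := fun r => |v r|)
    exact ⟨r, h.trans hr.ge⟩

lemma wdisc_le_infNorm (p : ℝ) {n m : ℕ} (A : Matrix (Fin n) (Fin m) ℝ) (x : Fin m → Fin 2) :
    wdisc p A ≤ infNorm (A.mulVec fun j => p - ((x j : ℕ) : ℝ)) :=
  ciInf_le ⟨0, by rintro _ ⟨y, rfl⟩; exact Real.iSup_nonneg fun _ => abs_nonneg _⟩ x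

lemma exists_row_le_abs_of_le_wdisc {p Δ : ℝ} {n m : ℕ} {A : Matrix (Fin n) (Fin m) ℝ}
    (hΔ : 0 < Δ) (h : Δ ≤ wdisc p A) (s : Finset (Fin m)) :
    ∃ r, Δ ≤ |p * ∑ g, A r g - ∑ g ∈ s, A r g| := by
  classical
  let x : Fin m → Fin 2 := fun g => if g ∈ s then 1 else 0
  have hx : ∀ g, ((x g : ℕ) : ℝ) = if g ∈ s then 1 else 0 := fun g => by
    by_cases hg : g ∈ s <;> simp [x, hg]
  obtain ⟨r, hr⟩ := exists_le_abs_of_le_infNorm hΔ (h.trans (wdisc_le_infNorm p A x))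
  refine ⟨r, hr.trans_eq (congrArg abs ?_)⟩
  simp only [Matrix.mulVec, dotProduct, hx, mul_sub, sum_sub_distrib, ← sum_mul, mul_ite, mul_one,
    mul_zero, sum_ite_mem, univ_inter, mul_comm p]

section Allocation

variable {k m : ℕ}

lemma sum_card_bundle (χ : Fin m → Fin k) : ∑ i, (bundle χ i).card = m := by
  simpa [bundle] using (card_eq_sum_card_fiberwise (f := χ) (s := univ) (t := univ)
    fun _ _ => mem_univ _).symm

variable {ns : Fin k → ℕ} {u : ∀ i : Fin k, Fin (ns i) → Fin m → ℝ} {χ : Fin m → Fin k} {c : ℝ}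

lemma IsProp.nonneg (h : IsProp ns u χ c) (i : Fin k) (j : Fin (ns i)) : 0 ≤ c := by
  obtain ⟨B, -, hB, -⟩ := h i j
  exact (Nat.cast_nonneg _).trans hB

lemma IsProp.share_sub_le (h : IsProp ns u χ c) (i : Fin k) (j : Fin (ns i))
    (hu : ∀ g, u i j g ≤ 1) :
    (∑ g, u i j g) / k - ∑ g ∈ bundle χ i, u i j g ≤ c := by
  obtain ⟨B, -, hBc, hB⟩ := h i j
  have : ∑ g ∈ B, u i j g ≤ B.card := by
    simpa using sum_le_card_nsmul B _ 1 fun g _ => hu g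
  linarith

end Allocation

lemma exists_mul_add_mul_le_sum {k : ℕ} (F : Fin k → ℝ) (t : Fin k) {L : ℝ}
    (hL : ∀ i, t < i → L ≤ F i) :
    ∃ i ≤ t, ((t : ℝ) + 1) * F i + (k - ((t : ℝ) + 1)) * L ≤ ∑ i, F i := by
  obtain ⟨i, hi, hmin⟩ := exists_min_image (Iic t) F ⟨t, mem_Iic.2 le_rfl⟩
  refine ⟨i, mem_Iic.1 hi, ?_⟩
  have hlow : #(Iic t) • F i ≤ ∑ i ∈ Iic t, F i := card_nsmul_le_sum _ _ _ hmin
  have hhigh : #(Iic t)ᶜ • L ≤ ∑ i ∈ (Iic t)ᶜ, F i :=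
    card_nsmul_le_sum _ _ _ fun j hj => hL j (by simpa using hj)
  have hcard : (#(Iic t) : ℝ) + #(Iic t)ᶜ = k := by
    exact_mod_cast (card_add_card_compl (Iic t)).trans (Fintype.card_fin k)
  rw [← sum_add_sum_compl (Iic t)]
  simp only [nsmul_eq_mul, Fin.card_Iic, Nat.cast_add, Nat.cast_one] at hlow hhigh hcard
  rw [show (k : ℝ) - ((t : ℝ) + 1) = #(Iic t)ᶜ by linarith]
  linarith

section Instance

variable {k m n : ℕ} (ns : Fin k → ℕ) (t : Fin k) (A : Matrix (Fin n) (Fin m) ℝ)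

def discrepancyInstance : ∀ i : Fin k, Fin (ns i) → Fin m → ℝ := fun i j g =>
  if i ≤ t then
    if h : (j : ℕ) < n then A ⟨j, h⟩ g
    else if h' : (j : ℕ) < 2 * n then 1 - A ⟨j - n, by omega⟩ g else 0
  else 1

variable {ns t A}

lemma discrepancyInstance_mem_Icc (hA : ∀ r g, A r g ∈ Set.Icc (0 : ℝ) 1) (i : Fin k)
    (j : Fin (ns i)) (g : Fin m) : discrepancyInstance ns t A i j g ∈ Set.Icc (0 : ℝ) 1 := by
  unfold discrepancyInstance
  split_ifs
  · exact hA _ _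
  · obtain ⟨h0, h1⟩ := hA ⟨j - n, by omega⟩ g
    constructor <;> linarith
  all_goals simp

lemma discrepancyInstance_of_lt {i : Fin k} (hi : t < i) (j : Fin (ns i)) (g : Fin m) :
    discrepancyInstance ns t A i j g = 1 := by
  simp [discrepancyInstance, not_le.2 hi]

lemma discrepancyInstance_row {i : Fin k} (hi : i ≤ t) (r : Fin n) (hr : (r : ℕ) < ns i)
    (g : Fin m) : discrepancyInstance ns t A i ⟨r, hr⟩ g = A r g := by
  simp [discrepancyInstance, hi]

lemma discrepancyInstance_complement {i : Fin k} (hi : i ≤ t) (r : Fin n)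
    (hr : n + r < ns i) (g : Fin m) :
    discrepancyInstance ns t A i ⟨n + r, hr⟩ g = 1 - A r g := by
  have : n + r < 2 * n := by omega
  simp [discrepancyInstance, hi, this]

variable {χ : Fin m → Fin k} {c : ℝ}

lemma IsProp.le_card_bundle_of_lt (hP : IsProp ns (discrepancyInstance ns t A) χ c)
    {i : Fin k} (hi : t < i) (hns : 1 ≤ ns i) : (m : ℝ) / k - c ≤ (bundle χ i).card := by
  have := hP.share_sub_le i ⟨0, hns⟩ fun g => (discrepancyInstance_of_lt hi _ g).le
  simp only [discrepancyInstance_of_lt hi, sum_const, card_univ, Fintype.card_fin,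
    nsmul_eq_mul, mul_one] at this
  linarith

lemma IsProp.row_deviation_le (hA : ∀ r g, A r g ∈ Set.Icc (0 : ℝ) 1)
    (hP : IsProp ns (discrepancyInstance ns t A) χ c) {i : Fin k} (hi : i ≤ t)
    (hns : 2 * n ≤ ns i) (r : Fin n) :
    (∑ g, A r g) / k - ∑ g ∈ bundle χ i, A r g ≤ c ∧
      ∑ g ∈ bundle χ i, A r g - (∑ g, A r g) / k ≤ (bundle χ i).card - m / k + c := by
  have hu j g := (discrepancyInstance_mem_Icc (ns := ns) (t := t) hA i j g).2
  have hrow := hP.share_sub_le i ⟨r, by omega⟩ (hu _)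
  have hcompl := hP.share_sub_le i ⟨n + r, by omega⟩ (hu _)
  simp only [discrepancyInstance_row hi, discrepancyInstance_complement hi, sum_sub_distrib,
    sum_const, card_univ, Fintype.card_fin, nsmul_eq_mul, mul_one, sub_div] at hrow hcompl
  constructor <;> linarith

end Instance

theorem prop_lower_bound_from_wdisc_general (k : ℕ) (ns : Fin k → ℕ)
    (hmono : ∀ a b : Fin k, a ≤ b → ns b ≤ ns a) (hpos : ∀ i, 1 ≤ ns i)
    (istar : Fin k) (Δ : ℝ)
    (hΔ : ∃ (m : ℕ) (A : Matrix (Fin (ns istar / 2)) (Fin m) ℝ),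
      (∀ i j, A i j ∈ Set.Icc (0 : ℝ) 1) ∧ Δ ≤ wdisc (1 / (k : ℝ)) A) :
    ∀ c : ℝ, c < (((istar : ℕ) : ℝ) + 1) / (k : ℝ) * Δ →
      ∃ (m : ℕ) (u : ∀ i : Fin k, Fin (ns i) → Fin m → ℝ),
        (∀ i j g, u i j g ∈ Set.Icc (0 : ℝ) 1) ∧
        ∀ χ : Fin m → Fin k, ¬ IsProp ns u χ c := by
  intro c hc
  obtain ⟨m, A, hA, hwdisc⟩ := hΔ
  refine ⟨m, discrepancyInstance ns istar A, discrepancyInstance_mem_Icc hA, fun χ hP => ?_⟩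
  have hk : (0 : ℝ) < k := by exact_mod_cast istar.pos
  have hc' : k * c < ((istar : ℕ) + 1) * Δ := by
    rw [div_mul_eq_mul_div, lt_div_iff₀ hk] at hc
    linarith
  have hc0 : 0 ≤ c := hP.nonneg istar ⟨0, hpos istar⟩
  have hΔ0 : 0 < Δ := pos_of_mul_pos_right (hc'.trans_le' (by positivity)) (by positivity)
  obtain ⟨i₀, hi₀, hsmall⟩ := exists_mul_add_mul_le_sum (fun i => ((bundle χ i).card : ℝ)) istar
    fun i hi => hP.le_card_bundle_of_lt hi (hpos i)
  rw [← Nat.cast_sum, sum_card_bundle] at hsmall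
  obtain ⟨r, hr⟩ := exists_row_le_abs_of_le_wdisc hΔ0 hwdisc (bundle χ i₀)
  obtain ⟨hbelow, habove⟩ :=
    hP.row_deviation_le hA hi₀ ((Nat.mul_div_le _ _).trans (hmono _ _ hi₀)) r
  rw [one_div_mul_eq_div] at hr
  set T : ℝ := (istar : ℕ) + 1 with hT
  have hT0 : 0 ≤ T := by positivity
  have hTk : T ≤ k := by rw [hT]; exact_mod_cast istar.isLt
  have hkm : (k : ℝ) * (m / k) = m := mul_div_cancel₀ _ hk.ne'
  rcases le_abs.1 hr with hr | hr
  · linarith [mul_le_mul_of_nonneg_left (hr.trans hbelow) hT0,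
      mul_le_mul_of_nonneg_right hTk hc0]
  · rw [neg_sub] at hr
    linarith [mul_le_mul_of_nonneg_left (hr.trans habove) hT0]

/-- Let `k ≥ 2` and `n₁ ≥ ⋯ ≥ n_k ≥ 1` be integers (given as an
antitone `ns : Fin k → ℕ`), let `i* ∈ [k]` (`istar : Fin k`, representing the
`(istar + 1)`-st group), and let `Δ` be such that some matrix
`A ∈ [0,1]^{⌊n_{i*}/2⌋ × m}` has `wdisc_{1/k}(A) ≥ Δ`.  Then for every real
`c < (i*/k)·Δ` there exists a group fair division instance with group sizes
`n₁, …, n_k` and all item utilities in `[0,1]` that admits no PROP`c` allocation.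
Consequently `c^PROP(n₁,…,n_k) ≥ max_{i*} (i*/k)·wdisc^max_{1/k}(⌊n_{i*}/2⌋)`. -/
theorem prop_lower_bound_from_wdisc (k : ℕ) (hk : 2 ≤ k) (ns : Fin k → ℕ)
    (hmono : ∀ a b : Fin k, a ≤ b → ns b ≤ ns a) (hpos : ∀ i, 1 ≤ ns i)
    (istar : Fin k) (Δ : ℝ)
    (hΔ : ∃ (m : ℕ) (A : Matrix (Fin (ns istar / 2)) (Fin m) ℝ),
      (∀ i j, A i j ∈ Set.Icc (0 : ℝ) 1) ∧ Δ ≤ wdisc (1 / (k : ℝ)) A) :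
    ∀ c : ℝ, c < (((istar : ℕ) : ℝ) + 1) / (k : ℝ) * Δ →
      ∃ (m : ℕ) (u : ∀ i : Fin k, Fin (ns i) → Fin m → ℝ),
        (∀ i j g, u i j g ∈ Set.Icc (0 : ℝ) 1) ∧
        ∀ χ : Fin m → Fin k, ¬ IsProp ns u χ c :=
  prop_lower_bound_from_wdisc_general k ns hmono hpos istar Δ hΔ
end

section
/- For all positive integers k ≥ 2 and n ≥ k, there exists a group fair division instance with k groups and n agents in total (with all item utilities in [0,1]) such that for every real c < √(n−1)/16, no allocation is a consensus 1/k-division up to c goods. Consequently, c^CD_k(n) ≥ √(n−1)/16 = Ω(√n). -/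
open Finset

/-- An allocation `χ` is a consensus `1/k`-division up to `c` goods (CD_k`c`): for all
`i, i' ∈ [k]` and every agent `a` (the `j`-th agent of any group `ig`), there exists
`B ⊆ G` with `|B| ≤ c` such that `u_a(A_i) ≥ u_a(A_{i'} \ B)`. -/
def IsCD {k m : ℕ} (ns : Fin k → ℕ) (u : ∀ i : Fin k, Fin (ns i) → Fin m → ℝ)
    (χ : Fin m → Fin k) (c : ℝ) : Prop :=
  ∀ (i i' : Fin k) (ig : Fin k) (j : Fin (ns ig)), ∃ B : Finset (Fin m),
    (B.card : ℝ) ≤ c ∧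
    ∑ g ∈ bundle χ i, u ig j g ≥ ∑ g ∈ bundle χ i' \ B, u ig j g

/-!
Take `2 ^ t ≤ n < 2 ^ (t + 1)`. Items come in `2 ^ t` types `x ∈ {0,1}^t`, with `⌊k/2⌋` copies
of each; an agent with character `w ∈ {0,1}^t` values an item of type `x` at
`(1 + (-1)^⟨x, w⟩) / 2`, and the `n` agents, all in one group, realise every character.

If an allocation is CD up to `c` goods, every agent sees any two bundles within `c` of each
other. The agent with character `0` sees the bundle sizes, so for every `w` the `w`-th Walsh
coefficient of the type counts of a bundle is within `3c` of its average over the `k` bundles,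
which is the coefficient of the constant function `⌊k/2⌋/k`. But the counts are integers and
`⌊k/2⌋/k ∈ [1/3, 1/2]`, so the deviation is at least `1/3` at each of the `2 ^ t` types, and
Parseval's identity forces `2 ^ t / 9 ≤ 9 c²`, whence `√(n - 1) ≤ 16 c`.
-/

open Matrix
open scoped symmDiff

section Walsh

variable {t : ℕ}

def walshMatrix (t : ℕ) : Matrix (Fin t → Bool) (Fin t → Bool) ℝ :=
  Matrix.of fun x y => ∏ i, if x i && y i then -1 else 1

@[simp]
lemma walshMatrix_bot_left (y : Fin t → Bool) : walshMatrix t ⊥ y = 1 := by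
  simp [walshMatrix]

@[simp]
lemma walshMatrix_bot_right (x : Fin t → Bool) : walshMatrix t x ⊥ = 1 := by
  simp [walshMatrix]

lemma abs_walshMatrix (x y : Fin t → Bool) : |walshMatrix t x y| = 1 := by
  simp only [walshMatrix, of_apply, Finset.abs_prod]
  exact Finset.prod_eq_one fun i _ => by split_ifs <;> simp

lemma walshMatrix_mul_walshMatrix (x x' y : Fin t → Bool) :
    walshMatrix t x y * walshMatrix t x' y = walshMatrix t (x ∆ x') y := by
  simp only [walshMatrix, of_apply, ← Finset.prod_mul_distrib]
  refine Finset.prod_congr rfl fun i _ => ?_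
  rw [Pi.symmDiff_apply, Bool.symmDiff_eq_xor]
  cases x i <;> cases x' i <;> cases y i <;> simp

lemma sum_walshMatrix_eq_zero {x : Fin t → Bool} (hx : x ≠ ⊥) :
    ∑ y, walshMatrix t x y = 0 := by
  obtain ⟨i, hi⟩ : ∃ i, x i = true := by
    by_contra! h
    exact hx (funext fun i => by simpa using h i)
  simp only [walshMatrix, of_apply]
  rw [← Fintype.prod_sum (fun i b => if x i && b then (-1 : ℝ) else 1)]
  exact Finset.prod_eq_zero (Finset.mem_univ i) (by simp [hi])

lemma walshMatrix_mul_transpose : walshMatrix t * (walshMatrix t)ᵀ = (2 ^ t : ℝ) • 1 := by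
  ext x x'
  rw [mul_apply, Matrix.smul_apply, one_apply]
  simp only [transpose_apply, walshMatrix_mul_walshMatrix]
  split_ifs with h
  · simp [h]
  · simp [sum_walshMatrix_eq_zero (symmDiff_eq_bot.not.mpr h)]

lemma vecMul_walshMatrix_dotProduct_self (δ : (Fin t → Bool) → ℝ) :
    δ ᵥ* walshMatrix t ⬝ᵥ δ ᵥ* walshMatrix t = 2 ^ t * (δ ⬝ᵥ δ) := by
  rw [← dotProduct_mulVec, ← mulVec_transpose, mulVec_mulVec, walshMatrix_mul_transpose,
    smul_mulVec, one_mulVec, dotProduct_smul, smul_eq_mul]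

lemma two_pow_mul_sq_le_of_abs_vecMul_walshMatrix_le {δ : (Fin t → Bool) → ℝ} {a b : ℝ}
    (ha : 0 ≤ a) (hδ : ∀ x, a ≤ |δ x|) (hb : ∀ w, |(δ ᵥ* walshMatrix t) w| ≤ b) :
    2 ^ t * a ^ 2 ≤ b ^ 2 := by
  have hcard : (Fintype.card (Fin t → Bool) : ℝ) = 2 ^ t := by simp
  have hlower : 2 ^ t * a ^ 2 ≤ δ ⬝ᵥ δ := by
    rw [← hcard, ← nsmul_eq_mul, ← Finset.card_univ, ← Finset.sum_const, dotProduct]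
    exact Finset.sum_le_sum fun x _ => by
      rw [← sq, ← sq_abs (δ x)]; exact pow_le_pow_left₀ ha (hδ x) 2
  have hupper : δ ᵥ* walshMatrix t ⬝ᵥ δ ᵥ* walshMatrix t ≤ 2 ^ t * b ^ 2 := by
    rw [← hcard, ← nsmul_eq_mul, ← Finset.card_univ, ← Finset.sum_const, dotProduct]
    exact Finset.sum_le_sum fun w _ => by
      rw [← sq, ← sq_abs]; exact pow_le_pow_left₀ (abs_nonneg _) (hb w) 2
  rw [vecMul_walshMatrix_dotProduct_self] at hupper
  have h2t : (0 : ℝ) < 2 ^ t := by positivity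
  nlinarith

noncomputable def walshUtility (x w : Fin t → Bool) : ℝ := (1 + walshMatrix t x w) / 2

lemma walshUtility_mem_Icc (x w : Fin t → Bool) : walshUtility x w ∈ Set.Icc (0 : ℝ) 1 := by
  have := abs_le.mp (abs_walshMatrix x w).le
  constructor <;> unfold walshUtility <;> linarith [this.1, this.2]

end Walsh

lemma abs_sub_mean_le {ι : Type*} [Fintype ι] [Nonempty ι] {v : ι → ℝ} {c : ℝ}
    (h : ∀ i j, |v i - v j| ≤ c) (i : ι) :
    |v i - (Fintype.card ι : ℝ)⁻¹ * ∑ j, v j| ≤ c := by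
  have hk : (0 : ℝ) < Fintype.card ι := by exact_mod_cast Fintype.card_pos
  have hmean : v i - (Fintype.card ι : ℝ)⁻¹ * ∑ j, v j
      = (Fintype.card ι : ℝ)⁻¹ * ∑ j, (v i - v j) := by
    rw [sum_sub_distrib, sum_const, card_univ, nsmul_eq_mul]
    field_simp
  rw [hmean, abs_mul, abs_inv, abs_of_pos hk, inv_mul_le_iff₀ hk]
  calc |∑ j, (v i - v j)| ≤ ∑ j, |v i - v j| := abs_sum_le_sum_abs _ _
    _ ≤ ∑ _j : ι, c := sum_le_sum fun j _ => h i j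
    _ = Fintype.card ι * c := by simp

lemma le_abs_natCast_sub {α : ℝ} (hα : α ≤ 1 / 2) (m : ℕ) : α ≤ |(m : ℝ) - α| := by
  rcases m.eq_zero_or_pos with rfl | hm
  · simpa using le_abs_self α
  · have : (1 : ℝ) ≤ m := by exact_mod_cast hm
    exact le_trans (by linarith) (le_abs_self _)

lemma sum_comp_eq_sum_card_mul {G X : Type*} [Fintype X] [DecidableEq X] (typ : G → X)
    (s : Finset G) (F : X → ℝ) :
    ∑ g ∈ s, F (typ g) = ∑ x, (#{g ∈ s | typ g = x} : ℝ) * F x := by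
  rw [← sum_fiberwise s typ]
  refine sum_congr rfl fun x _ => ?_
  rw [sum_congr rfl fun g hg => by rw [(mem_filter.mp hg).2], sum_const, nsmul_eq_mul]

theorem two_pow_mul_sq_le_of_walshUtility_gap_le {t : ℕ} {G ι : Type*} [Fintype G] [Fintype ι]
    [DecidableEq ι] [Nonempty ι] (typ : G → Fin t → Bool) {μ : ℕ}
    (hμ : ∀ x, #{g | typ g = x} = μ) (hμι : 2 * μ ≤ Fintype.card ι) (χ : G → ι) {c : ℝ}
    (hc : ∀ w i i', |∑ g with χ g = i, walshUtility (typ g) w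
      - ∑ g with χ g = i', walshUtility (typ g) w| ≤ c) :
    2 ^ t * ((μ : ℝ) / Fintype.card ι) ^ 2 ≤ (3 * c) ^ 2 := by
  set k : ℝ := (Fintype.card ι : ℝ)
  set α : ℝ := μ / k
  let f : ι → (Fin t → Bool) → ℝ := fun i x => #{g ∈ {g | χ g = i} | typ g = x}
  have hutil : ∀ i w, ∑ g with χ g = i, walshUtility (typ g) w
      = ((f i ᵥ* walshMatrix t) ⊥ + (f i ᵥ* walshMatrix t) w) / 2 := by
    intro i w
    refine (sum_comp_eq_sum_card_mul typ _ fun x => walshUtility x w).trans ?_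
    simp only [walshUtility, vecMul, dotProduct, walshMatrix_bot_right, f, ← sum_add_distrib,
      sum_div]
    exact sum_congr rfl fun x _ => by ring
  -- `(f i ᵥ* walshMatrix t) ⊥` is the size of bundle `i`, whose gaps agent `⊥` bounds by `c`.
  have hgap : ∀ w i i', |(f i ᵥ* walshMatrix t) w - (f i' ᵥ* walshMatrix t) w| ≤ 3 * c := by
    intro w i i'
    have h₀ := abs_le.mp (hc ⊥ i i')
    have hw := abs_le.mp (hc w i i')
    rw [hutil, hutil] at h₀ hw
    exact abs_le.mpr ⟨by linarith [h₀.1, h₀.2, hw.1, hw.2], by linarith [h₀.1, h₀.2, hw.1, hw.2]⟩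
  have hsum : ∑ i, f i = fun _ => (μ : ℝ) := by
    ext x
    simp only [Finset.sum_apply, f, ← Nat.cast_sum, ← hμ x, filter_comm]
    rw [card_eq_sum_card_fiberwise (f := χ) (t := univ) fun _ _ => mem_univ _]
  have hα : α ≤ 1 / 2 := by
    have hk : (0 : ℝ) < k := Nat.cast_pos.mpr Fintype.card_pos
    have : 2 * (μ : ℝ) ≤ k := by simp only [k]; exact_mod_cast hμι
    rw [div_le_iff₀ hk]
    linarith
  obtain ⟨i₀⟩ := ‹Nonempty ι›
  refine two_pow_mul_sq_le_of_abs_vecMul_walshMatrix_le (δ := f i₀ - fun _ => α)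
    (by positivity) (fun x => le_abs_natCast_sub hα _) fun w => ?_
  have hmean : (fun _ => α) = k⁻¹ • ∑ i, f i := by
    rw [hsum]; ext; simp [α, div_eq_inv_mul]
  rw [hmean, sub_vecMul, smul_vecMul, sum_vecMul]
  simpa using abs_sub_mean_le (hgap w) i₀

section IsCD

variable {k m : ℕ} {ns : Fin k → ℕ} {u : ∀ i : Fin k, Fin (ns i) → Fin m → ℝ}
  {χ : Fin m → Fin k} {c : ℝ}

lemma IsCD.sum_le_sum_add (h : IsCD ns u χ c) (hu : ∀ ig j g, u ig j g ≤ 1)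
    (i i' ig : Fin k) (j : Fin (ns ig)) :
    ∑ g ∈ bundle χ i', u ig j g ≤ ∑ g ∈ bundle χ i, u ig j g + c := by
  obtain ⟨B, hB, hle⟩ := h i i' ig j
  have hinter : ∑ g ∈ bundle χ i' ∩ B, u ig j g ≤ c :=
    calc ∑ g ∈ bundle χ i' ∩ B, u ig j g ≤ #(bundle χ i' ∩ B) • (1 : ℝ) :=
          sum_le_card_nsmul _ _ _ fun g _ => hu ig j g
      _ ≤ #B := by
          rw [nsmul_one]; exact_mod_cast card_le_card inter_subset_right
      _ ≤ c := hB
  linarith [sum_inter_add_sum_sdiff (bundle χ i') B (u ig j)]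

lemma IsCD.abs_sub_le (h : IsCD ns u χ c) (hu : ∀ ig j g, u ig j g ≤ 1)
    (i i' ig : Fin k) (j : Fin (ns ig)) :
    |∑ g ∈ bundle χ i, u ig j g - ∑ g ∈ bundle χ i', u ig j g| ≤ c :=
  abs_sub_le_iff.mpr ⟨by linarith [h.sum_le_sum_add hu i' i ig j],
    by linarith [h.sum_le_sum_add hu i i' ig j]⟩

end IsCD

lemma one_div_three_le_natCast_half_div {k : ℕ} (hk : 2 ≤ k) :
    (1 / 3 : ℝ) ≤ ((k / 2 : ℕ) : ℝ) / k := by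
  rw [le_div_iff₀ (by positivity)]
  have : (k : ℝ) ≤ 3 * ((k / 2 : ℕ) : ℝ) := by exact_mod_cast (by omega : k ≤ 3 * (k / 2))
  linarith

noncomputable def itemType (t μ : ℕ) (g : Fin (Fintype.card ((Fin t → Bool) × Fin μ))) :
    Fin t → Bool :=
  ((Fintype.equivFin _).symm g).1

lemma card_filter_itemType_eq (t μ : ℕ) (x : Fin t → Bool) : #{g | itemType t μ g = x} = μ := by
  rw [card_filter, ← (Fintype.equivFin _).sum_comp, Fintype.sum_prod_type]
  simp [itemType]

noncomputable def agentChar (t j : ℕ) : Fin t → Bool :=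
  if h : j < Fintype.card (Fin t → Bool) then (Fintype.equivFin _).symm ⟨j, h⟩ else ⊥

lemma exists_agentChar_eq (t : ℕ) (w : Fin t → Bool) : ∃ j < 2 ^ t, agentChar t j = w :=
  ⟨Fintype.equivFin _ w, by simpa using (Fintype.equivFin _ w).isLt, by
    rw [agentChar, dif_pos (Fintype.equivFin _ w).isLt]; simp⟩

/-- For all positive integers `k ≥ 2` and `n ≥ k`, there exists a group
fair division instance with `k` groups and `n` agents in total (all item utilities in
`[0,1]`) such that for every real `c < √(n−1)/16`, no allocation is a consensus
`1/k`-division up to `c` goods.  Consequently `c^CD_k(n) ≥ √(n−1)/16 = Ω(√n)`. -/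
theorem cd_lower_bound (k n : ℕ) (hk : 2 ≤ k) (hn : k ≤ n) :
    ∃ (ns : Fin k → ℕ), (∑ i, ns i) = n ∧
      ∃ (m : ℕ) (u : ∀ i : Fin k, Fin (ns i) → Fin m → ℝ),
        (∀ i j g, u i j g ∈ Set.Icc (0 : ℝ) 1) ∧
        ∀ c : ℝ, c < Real.sqrt ((n : ℝ) - 1) / 16 →
          ∀ χ : Fin m → Fin k, ¬ IsCD ns u χ c := by
  have : NeZero k := ⟨by omega⟩
  set t := Nat.log 2 n
  have htn : 2 ^ t ≤ n := Nat.pow_log_le_self 2 (by omega)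
  refine ⟨Pi.single 0 n, by simp, _,
    fun _ j g => walshUtility (itemType t (k / 2) g) (agentChar t j),
    fun _ _ _ => walshUtility_mem_Icc _ _, fun c hc χ hχ => ?_⟩
  have hgap : ∀ w i i', |∑ g ∈ bundle χ i, walshUtility (itemType t (k / 2) g) w
      - ∑ g ∈ bundle χ i', walshUtility (itemType t (k / 2) g) w| ≤ c := by
    intro w i i'
    obtain ⟨j, hj, rfl⟩ := exists_agentChar_eq t w
    exact hχ.abs_sub_le (fun _ _ _ => (walshUtility_mem_Icc _ _).2) i i' 0
      ⟨j, by simp only [Pi.single_eq_same]; omega⟩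
  have hc0 : 0 ≤ c := by simpa using hgap ⊥ 0 0
  have hkey := two_pow_mul_sq_le_of_walshUtility_gap_le (itemType t (k / 2))
    (card_filter_itemType_eq t _) (by simp only [Fintype.card_fin]; omega) χ hgap
  simp only [Fintype.card_fin] at hkey
  have hnt : (n : ℝ) ≤ 2 * 2 ^ t := by
    have : n < 2 ^ t * 2 := pow_succ 2 t ▸ Nat.lt_pow_succ_log_self (by norm_num) n
    exact_mod_cast (by omega : n ≤ 2 * 2 ^ t)
  have : Real.sqrt ((n : ℝ) - 1) ≤ 16 * c := by
    rw [Real.sqrt_le_left (by positivity)]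
    nlinarith [pow_le_pow_left₀ (by norm_num) (one_div_three_le_natCast_half_div hk) 2]
  linarith
end

section
/- Let k, n₁, ..., n_k be positive integers and let H be a real number such that for every m ∈ ℕ and all matrices A¹ ∈ [0,1]^{n₁×m}, ..., A^k ∈ [0,1]^{n_k×m}, there exists a coloring χ: [m] → [k] with max over s ∈ [k] of ‖A^s((1/k)·𝟏 − 𝟏(χ⁻¹(s)))‖_∞ ≤ H (i.e., exodisc(n₁,...,n_k) ≤ H). Then every group fair division instance with group sizes n₁,...,n_k admits an allocation that is PROPc with c = 2·⌈H⌉. Consequently, c^PROP(n₁,...,n_k) ≤ 2·⌈exodisc(n₁,...,n_k)⌉. -/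
open Finset

/-- There is a set of `n` "top" items for any `f : Fin m → ℝ`. -/
lemma exists_top {m : ℕ} (f : Fin m → ℝ) :
    ∀ n, n ≤ m → ∃ T : Finset (Fin m), T.card = n ∧ ∀ g ∉ T, ∀ t ∈ T, f g ≤ f t := by
  intro n
  induction n with
  | zero => exact fun _ => ⟨∅, rfl, by simp⟩
  | succ n ih =>
    intro hn
    obtain ⟨T, hcard, htop⟩ := ih (Nat.le_of_succ_le hn)
    have hne : (Finset.univ \ T).Nonempty := by
      rw [Finset.sdiff_nonempty]
      intro hsub
      have hle := Finset.card_le_card hsub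
      simp [hcard] at hle
      omega
    obtain ⟨b, hb, hmax⟩ := Finset.exists_max_image _ f hne
    have hbT : b ∉ T := (Finset.mem_sdiff.mp hb).2
    refine ⟨insert b T, by rw [Finset.card_insert_of_notMem hbT, hcard], ?_⟩
    intro g hg t ht
    have hgT : g ∉ T := fun hmem => hg (Finset.mem_insert_of_mem hmem)
    rcases Finset.mem_insert.mp ht with rfl | htT
    · exact hmax g (Finset.mem_sdiff.mpr ⟨Finset.mem_univ g, hgT⟩)
    · exact htop g hgT t htT

/-- Let `k, n₁, …, n_k` be positive integers and `H` a real number such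
that for every `m ∈ ℕ` and all matrices `A^s ∈ [0,1]^{n_s × m}` (`s ∈ [k]`) there exists
a coloring `χ : [m] → [k]` with `‖A^s((1/k)·𝟏 − 𝟏(χ⁻¹(s)))‖_∞ ≤ H` for all `s`
(i.e. `exodisc(n₁,…,n_k) ≤ H`).  Then every group fair division instance with group sizes
`n₁, …, n_k` (nonnegative additive utilities) admits a PROP`c` allocation with
`c = 2·⌈H⌉`.  Consequently `c^PROP(n₁,…,n_k) ≤ 2·⌈exodisc(n₁,…,n_k)⌉`. -/
theorem odisc_to_prop (k : ℕ) (hk : 0 < k) (ns : Fin k → ℕ) (hpos : ∀ i, 1 ≤ ns i)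
    (H : ℝ)
    (hH : ∀ (m : ℕ) (A : ∀ s : Fin k, Matrix (Fin (ns s)) (Fin m) ℝ),
      (∀ s i j, A s i j ∈ Set.Icc (0 : ℝ) 1) →
      ∃ χ : Fin m → Fin k, ∀ (s : Fin k) (i : Fin (ns s)),
        |(A s).mulVec (fun j => 1 / (k : ℝ) - if χ j = s then 1 else 0) i| ≤ H) :
    ∀ (m : ℕ) (u : ∀ i : Fin k, Fin (ns i) → Fin m → ℝ),
      (∀ i j g, 0 ≤ u i j g) →
      ∃ χ : Fin m → Fin k, IsProp ns u χ (2 * (⌈H⌉ : ℝ)) := by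
  intro m u hu
  -- `H` is nonnegative (apply the hypothesis to the empty instance `m = 0`)
  have hH0 : 0 ≤ H := by
    obtain ⟨χ, hχ⟩ := hH 0 (fun s => 0) (fun s i j => j.elim0)
    have h0 := hχ ⟨0, hk⟩ ⟨0, hpos _⟩
    simpa [Matrix.zero_mulVec] using h0
  have hceil0 : (0:ℝ) ≤ (⌈H⌉ : ℝ) := by exact_mod_cast Int.ceil_nonneg hH0
  set h : ℕ := (⌈H⌉).toNat with hhdef
  have hhR : (h : ℝ) = (⌈H⌉ : ℝ) := by
    rw [hhdef]; exact_mod_cast Int.toNat_of_nonneg (Int.ceil_nonneg hH0)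
  have hHh : H ≤ (h : ℝ) := by rw [hhR]; exact Int.le_ceil H
  have hk1R : (1:ℝ) ≤ (k:ℝ) := by exact_mod_cast hk
  have hkpos : (0:ℝ) < (k:ℝ) := by exact_mod_cast hk
  by_cases hkone : k = 1
  · -- trivial case `k = 1` : the unique group gets everything
    subst hkone
    refine ⟨fun _ => 0, ?_⟩
    intro i j
    refine ⟨∅, fun g hg => absurd hg (Finset.notMem_empty g), ?_, ?_⟩
    · simp only [Finset.card_empty, Nat.cast_zero]; linarith
    · have hb : bundle (fun _ : Fin m => (0 : Fin 1)) i = Finset.univ := by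
        ext g; simp [bundle, Subsingleton.elim (0 : Fin 1) i]
      rw [hb]
      simp
  by_cases hml : 2 * h ≤ m
  swap
  · -- trivial case `m < 2h` : remove everything outside the bundle
    refine ⟨fun _ => ⟨0, hk⟩, ?_⟩
    intro i j
    set S := bundle (fun _ : Fin m => (⟨0, hk⟩ : Fin k)) i with hS
    refine ⟨Finset.univ \ S, fun g hg => (Finset.mem_sdiff.mp hg).2, ?_, ?_⟩
    · have h1 : (Finset.univ \ S).card ≤ m :=
        le_trans (Finset.card_le_card Finset.sdiff_subset) (by simp)
      have h2 : (Finset.univ \ S).card ≤ 2 * h := by omega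
      calc ((Finset.univ \ S).card : ℝ) ≤ ((2 * h : ℕ) : ℝ) := by exact_mod_cast h2
        _ = 2 * (⌈H⌉ : ℝ) := by push_cast [hhR]; ring
    · have hsd : ∑ g ∈ Finset.univ \ S, u i j g + ∑ g ∈ S, u i j g = ∑ g, u i j g :=
        Finset.sum_sdiff (Finset.subset_univ _)
      have hnn : 0 ≤ ∑ g, u i j g := Finset.sum_nonneg fun g _ => hu i j g
      have hdle : (∑ g, u i j g) / (k:ℝ) ≤ ∑ g, u i j g := div_le_self hnn hk1R
      linarith
  -- main case : `k ≥ 2` and `m ≥ 2h`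
  have hk2 : 2 ≤ k := by omega
  have hk2R : (2:ℝ) ≤ (k:ℝ) := by exact_mod_cast hk2
  choose T hTcard hTtop using fun (s : Fin k) (i : Fin (ns s)) => exists_top (u s i) (2 * h) hml
  set τ : ∀ s : Fin k, Fin (ns s) → ℝ := fun s i =>
    if hne : (T s i).Nonempty then (T s i).inf' hne (u s i) else 1 + ∑ g, u s i g with hτ
  have hτnn : ∀ s i, 0 ≤ τ s i := by
    intro s i
    simp only [hτ]
    split_ifs with hne
    · exact Finset.le_inf' hne _ fun b _ => hu s i b
    · have : 0 ≤ ∑ g, u s i g := Finset.sum_nonneg fun g _ => hu s i g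
      linarith
  have hτle : ∀ s i g, g ∉ T s i → u s i g ≤ τ s i := by
    intro s i g hg
    simp only [hτ]
    split_ifs with hne
    · exact Finset.le_inf' hne _ fun t ht => hTtop s i g hg t ht
    · have hle : u s i g ≤ ∑ g', u s i g' :=
        Finset.single_le_sum (fun g' _ => hu s i g') (Finset.mem_univ g)
      linarith
  have hbound : ∀ (s : Fin k) (i : Fin (ns s)) (g : Fin m),
      (if g ∈ T s i then (0:ℝ) else u s i g / τ s i) ∈ Set.Icc (0:ℝ) 1 := by
    intro s i g
    constructor
    · split_ifs with hg
      · exact le_rfl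
      · exact div_nonneg (hu s i g) (hτnn s i)
    · split_ifs with hg
      · exact zero_le_one
      · exact div_le_one_of_le₀ (hτle s i g hg) (hτnn s i)
  obtain ⟨χ, hχ⟩ := hH m
    (fun s => Matrix.of fun i g => if g ∈ T s i then (0:ℝ) else u s i g / τ s i)
    (fun s i g => hbound s i g)
  refine ⟨χ, ?_⟩
  intro i j
  set S := bundle χ i with hS
  refine ⟨T i j \ S, fun g hg => (Finset.mem_sdiff.mp hg).2, ?_, ?_⟩
  · calc ((T i j \ S).card : ℝ) ≤ ((T i j).card : ℝ) := by
          exact_mod_cast Finset.card_le_card Finset.sdiff_subset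
      _ = 2 * (⌈H⌉ : ℝ) := by rw [hTcard i j]; push_cast [hhR]; ring
  -- the discrepancy bound for agent (i, j)
  have hdisc := (abs_le.mp (hχ i j)).2
  simp only [Matrix.mulVec, dotProduct, Matrix.of_apply] at hdisc
  have hX : (∑ g, (if g ∈ T i j then (0:ℝ) else u i j g / τ i j)) / (k:ℝ)
      - ∑ g ∈ S, (if g ∈ T i j then (0:ℝ) else u i j g / τ i j) ≤ H := by
    refine le_trans (le_of_eq ?_) hdisc
    rw [hS]; unfold bundle
    rw [Finset.sum_filter, Finset.sum_div, ← Finset.sum_sub_distrib]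
    refine Finset.sum_congr rfl fun g _ => ?_
    by_cases hg : χ g = i <;> by_cases hg2 : g ∈ T i j <;> simp [hg, hg2] <;> ring
  set v : Fin m → ℝ := fun g => if g ∈ T i j then 0 else u i j g with hv
  -- key 1 : discrepancy bound for the capped utility
  have key1 : (∑ g, v g) / (k:ℝ) - ∑ g ∈ S, v g ≤ H * τ i j := by
    by_cases hτ0 : τ i j = 0
    · have hv0 : ∀ g, v g = 0 := by
        intro g
        simp only [hv]
        split_ifs with hg
        · rfl
        · exact le_antisymm (hτ0 ▸ hτle i j g hg) (hu i j g)
      simp [hv0, hτ0]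
    · have hvw : ∀ g, v g = τ i j * (if g ∈ T i j then (0:ℝ) else u i j g / τ i j) := by
        intro g
        simp only [hv]
        split_ifs with hg
        · ring
        · rw [mul_comm, div_mul_cancel₀ _ hτ0]
      have heq : (∑ g, v g) / (k:ℝ) - ∑ g ∈ S, v g
          = τ i j * ((∑ g, (if g ∈ T i j then (0:ℝ) else u i j g / τ i j)) / (k:ℝ)
            - ∑ g ∈ S, (if g ∈ T i j then (0:ℝ) else u i j g / τ i j)) := by
        simp only [hvw]
        rw [← Finset.mul_sum, ← Finset.mul_sum, mul_sub, mul_div_assoc]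
      rw [heq, mul_comm H (τ i j)]
      exact mul_le_mul_of_nonneg_left hX (hτnn i j)
  -- key 2 : the error is covered by the top items
  have hTnn : 0 ≤ ∑ t ∈ T i j, u i j t := Finset.sum_nonneg fun t _ => hu i j t
  have key2 : H * τ i j ≤ (∑ t ∈ T i j, u i j t) - (∑ t ∈ T i j, u i j t) / (k:ℝ) := by
    by_cases hzero : h = 0
    · have hH00 : H = 0 := le_antisymm (by rw [hzero] at hHh; simpa using hHh) hH0
      rw [hH00, zero_mul]
      have := div_le_self hTnn hk1R
      linarith
    · have hne : (T i j).Nonempty := Finset.card_pos.mp (by rw [hTcard i j]; omega)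
      have hτeq : τ i j = (T i j).inf' hne (u i j) := by
        simp only [hτ]; rw [dif_pos hne]
      have hsum : 2 * (h:ℝ) * τ i j ≤ ∑ t ∈ T i j, u i j t := by
        have hcard := Finset.card_nsmul_le_sum (T i j) (u i j) (τ i j)
          (fun t ht => by rw [hτeq]; exact Finset.inf'_le _ ht)
        rw [hTcard i j, nsmul_eq_mul] at hcard
        push_cast at hcard
        linarith
      have h1 : H * τ i j ≤ (h:ℝ) * τ i j := mul_le_mul_of_nonneg_right hHh (hτnn i j)
      have h2 : (∑ t ∈ T i j, u i j t) / (k:ℝ) ≤ (∑ t ∈ T i j, u i j t) / 2 := by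
        rw [div_le_div_iff₀ hkpos (by norm_num)]
        nlinarith [hTnn, hk2R]
      linarith
  -- bookkeeping sums
  have hvW : ∀ W : Finset (Fin m), ∑ g ∈ W, v g = ∑ g ∈ W \ T i j, u i j g := by
    intro W
    rw [Finset.sdiff_eq_filter, Finset.sum_filter]
    exact Finset.sum_congr rfl fun g _ => by
      by_cases hg : g ∈ T i j <;> simp [hv, hg]
  have e2 := hvW S
  have e3 := hvW Finset.univ
  have e4 : ∑ g ∈ Finset.univ \ T i j, u i j g + ∑ g ∈ T i j, u i j g = ∑ g, u i j g :=
    Finset.sum_sdiff (Finset.subset_univ _)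
  have e5 : ∑ g ∈ S ∩ T i j, u i j g + ∑ g ∈ S \ T i j, u i j g = ∑ g ∈ S, u i j g :=
    Finset.sum_inter_add_sum_sdiff S (T i j) _
  have e6 : ∑ g ∈ T i j ∩ S, u i j g + ∑ g ∈ T i j \ S, u i j g = ∑ g ∈ T i j, u i j g :=
    Finset.sum_inter_add_sum_sdiff (T i j) S _
  have e7 : ∑ g ∈ S ∩ T i j, u i j g = ∑ g ∈ T i j ∩ S, u i j g := by
    rw [Finset.inter_comm]
  have e8 : (∑ g, u i j g) / (k:ℝ)
      = (∑ g, v g) / (k:ℝ) + (∑ t ∈ T i j, u i j t) / (k:ℝ) := by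
    rw [← e4, add_div, ← e3]
  linarith [key1, key2, e2, e5, e6, e7, e8]
end

section
/- Let k ≥ 2 and n ≥ k be positive integers, and let Δ be a real number such that there exist m ∈ ℕ and a matrix A ∈ [0,1]^{n×m} whose k-color discrepancy satisfies disc(A, k) ≥ Δ. Then for every real c < Δ, there exists a group fair division instance with k groups and n agents in total (with all item utilities in [0,1]) that admits no CD_k c allocation. Consequently, c^CD_k(n) ≥ exdisc(n, k). -/
open Finset

/-- The `k`-color discrepancy of a matrix `A ∈ [0,1]^{n×m}`:
`disc(A, k) = min over χ : [m] → [k] of max over s ∈ [k] of ‖A((1/k)·𝟏 − 𝟏(χ⁻¹(s)))‖_∞`. -/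
noncomputable def kdisc (k : ℕ) {n m : ℕ} (A : Matrix (Fin n) (Fin m) ℝ) : ℝ :=
  ⨅ χ : Fin m → Fin k, ⨆ s : Fin k,
    infNorm (A.mulVec (fun j => 1 / (k : ℝ) - if χ j = s then 1 else 0))

/-- Removing a set `B` of goods decreases the (additive, `[0,1]`-valued) utility of a
bundle by at most `|B|`. -/
lemma sum_sdiff_ge_aux {m : ℕ} (f : Fin m → ℝ) (hf1 : ∀ g, f g ≤ 1)
    (S B : Finset (Fin m)) : ∑ g ∈ S, f g - (B.card : ℝ) ≤ ∑ g ∈ S \ B, f g := by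
  have h1 : ∑ g ∈ S, f g = ∑ g ∈ S \ B, f g + ∑ g ∈ S ∩ B, f g := by
    rw [← Finset.sum_sdiff (Finset.inter_subset_left (s₂ := B))]
    congr 2
    ext g
    simp only [Finset.mem_sdiff, Finset.mem_inter]
    tauto
  have h2 : ∑ g ∈ S ∩ B, f g ≤ ((S ∩ B).card : ℝ) := by
    calc ∑ g ∈ S ∩ B, f g ≤ ∑ _g ∈ S ∩ B, (1 : ℝ) :=
          Finset.sum_le_sum fun g _ => hf1 g
      _ = ((S ∩ B).card : ℝ) := by simp
  have h3 : ((S ∩ B).card : ℝ) ≤ (B.card : ℝ) := by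
    exact_mod_cast Finset.card_le_card Finset.inter_subset_right
  linarith

/-- Let `k ≥ 2` and `n ≥ k` be positive integers and `Δ` a real number
such that some matrix `A ∈ [0,1]^{n×m}` has `disc(A, k) ≥ Δ`.  Then for every real
`c < Δ`, there exists a group fair division instance with `k` groups and `n` agents in
total (all item utilities in `[0,1]`) that admits no CD_k`c` allocation.  Consequently
`c^CD_k(n) ≥ exdisc(n, k)`. -/
theorem cd_lower_bound_from_disc (k n : ℕ) (hk : 2 ≤ k) (hn : k ≤ n) (Δ : ℝ)
    (hΔ : ∃ (m : ℕ) (A : Matrix (Fin n) (Fin m) ℝ),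
      (∀ i j, A i j ∈ Set.Icc (0 : ℝ) 1) ∧ Δ ≤ kdisc k A) :
    ∀ c : ℝ, c < Δ →
      ∃ (ns : Fin k → ℕ), (∑ i, ns i) = n ∧
        ∃ (m : ℕ) (u : ∀ i : Fin k, Fin (ns i) → Fin m → ℝ),
          (∀ i j g, u i j g ∈ Set.Icc (0 : ℝ) 1) ∧
          ∀ χ : Fin m → Fin k, ¬ IsCD ns u χ c := by
  obtain ⟨m, A, hA, hAd⟩ := hΔ
  intro c hc
  have hk0 : 0 < k := by omega
  have hn0 : 0 < n := by omega
  haveI : Nonempty (Fin k) := ⟨⟨0, hk0⟩⟩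
  haveI : Nonempty (Fin n) := ⟨⟨0, hn0⟩⟩
  set ns : Fin k → ℕ := fun i => (if i = (⟨0, hk0⟩ : Fin k) then n - k else 0) + 1 with hns
  have hsum : (∑ i, ns i) = n := by
    simp only [hns, Finset.sum_add_distrib, Finset.sum_ite_eq', Finset.mem_univ, if_true,
      Finset.sum_const, Finset.card_univ, Fintype.card_fin, smul_eq_mul, mul_one]
    omega
  have hcard : Fintype.card (Σ i : Fin k, Fin (ns i)) = n := by
    rw [Fintype.card_sigma]
    simpa using hsum
  let e : (Σ i : Fin k, Fin (ns i)) ≃ Fin n := Fintype.equivFinOfCardEq hcard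
  refine ⟨ns, hsum, m, fun i j g => A (e ⟨i, j⟩) g, fun i j g => hA _ _, ?_⟩
  intro χ hCD
  -- extract a bad color s0 and row i0
  have hle : Δ ≤ ⨆ s : Fin k,
      infNorm (A.mulVec fun j => 1 / (k : ℝ) - if χ j = s then 1 else 0) :=
    hAd.trans (ciInf_le (Finite.bddBelow_range _) χ)
  obtain ⟨s0, hs0⟩ := Finite.exists_max (fun s : Fin k =>
    infNorm (A.mulVec fun j => 1 / (k : ℝ) - if χ j = s then 1 else 0))
  have hΔ1 : Δ ≤ infNorm (A.mulVec fun j => 1 / (k : ℝ) - if χ j = s0 then 1 else 0) :=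
    hle.trans (ciSup_le hs0)
  obtain ⟨i0, hi0⟩ := Finite.exists_max (fun i : Fin n =>
    |A.mulVec (fun j => 1 / (k : ℝ) - if χ j = s0 then 1 else 0) i|)
  have hΔ2 : Δ ≤ |A.mulVec (fun j => 1 / (k : ℝ) - if χ j = s0 then 1 else 0) i0| :=
    hΔ1.trans (ciSup_le hi0)
  set T : ℝ := ∑ j, A i0 j with hT
  set U : Fin k → ℝ := fun s => ∑ g ∈ bundle χ s, A i0 g with hU
  have hmv : A.mulVec (fun j => 1 / (k : ℝ) - if χ j = s0 then 1 else 0) i0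
      = T / k - U s0 := by
    simp only [Matrix.mulVec, dotProduct, mul_sub, mul_one_div, mul_ite, mul_one,
      mul_zero, Finset.sum_sub_distrib]
    rw [hU, hT]
    simp only [bundle, Finset.sum_filter]
    rw [← Finset.sum_div]
  have hsumU : ∑ s, U s = T := by
    simp only [hU, hT, bundle]
    exact Finset.sum_fiberwise _ _ _
  have hk' : (0 : ℝ) < (k : ℝ) := by exact_mod_cast hk0
  -- the agent corresponding to row i0
  set a := e.symm i0 with ha
  have heq : e ⟨a.1, a.2⟩ = i0 := by
    rw [Sigma.eta, ha, e.apply_symm_apply]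
  have hΔ3 : Δ ≤ |T / k - U s0| := hmv ▸ hΔ2
  rcases abs_cases (T / k - U s0) with ⟨habs, _⟩ | ⟨habs, _⟩
  · -- U s0 ≤ T/k - Δ; find s1 with T/k ≤ U s1
    have hsum_le : ∑ _s : Fin k, T / (k : ℝ) ≤ ∑ s, U s := by
      rw [hsumU]
      simp only [Finset.sum_const, Finset.card_univ, Fintype.card_fin, smul_eq_mul]
      rw [nsmul_eq_mul, mul_div_cancel₀ _ (ne_of_gt hk')]
    obtain ⟨s1, _, hs1⟩ := Finset.exists_le_of_sum_le Finset.univ_nonempty hsum_le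
    obtain ⟨B, hB, hge⟩ := hCD s0 s1 a.1 a.2
    simp only [heq] at hge
    have hkey := sum_sdiff_ge_aux (fun g => A i0 g) (fun g => (hA i0 g).2)
      (bundle χ s1) B
    rw [habs] at hΔ3
    have : U s0 ≥ ∑ g ∈ bundle χ s1 \ B, A i0 g := hge
    linarith
  · -- T/k ≤ U s0 - Δ; find s1 with U s1 ≤ T/k
    have hsum_le : ∑ s, U s ≤ ∑ _s : Fin k, T / (k : ℝ) := by
      rw [hsumU]
      simp only [Finset.sum_const, Finset.card_univ, Fintype.card_fin, smul_eq_mul]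
      rw [nsmul_eq_mul, mul_div_cancel₀ _ (ne_of_gt hk')]
    obtain ⟨s1, _, hs1⟩ := Finset.exists_le_of_sum_le Finset.univ_nonempty hsum_le
    obtain ⟨B, hB, hge⟩ := hCD s1 s0 a.1 a.2
    simp only [heq] at hge
    have hkey := sum_sdiff_ge_aux (fun g => A i0 g) (fun g => (hA i0 g).2)
      (bundle χ s0) B
    rw [habs] at hΔ3
    have : U s1 ≥ ∑ g ∈ bundle χ s0 \ B, A i0 g := hge
    linarith
end

section
/- Let k ≥ 2 and n₁ ≥ n₂ ≥ ... ≥ n_k ≥ 1 be integers, and let Δ be a real number such that there exist m ∈ ℕ and a matrix A ∈ [0,1]^{n′×m}, with n′ = ⌊n₁/2⌋, whose (1/k)-weighted discrepancy satisfies wdisc_{1/k}(A) ≥ Δ. Then for every real c < Δ/k, there exists a group fair division instance with group sizes n₁,...,n_k (with all item utilities in [0,1]) that admits no EFc allocation. Consequently, c^EF(n₁,...,n_k) ≥ wdisc^max_{1/k}(⌊n₁/2⌋)/k. -/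
open Finset

/-- An allocation `χ` is envy-free up to `c` goods (EF`c`): for all `i, i' ∈ [k]` and
`j ∈ [n_i]` there exists `B ⊆ G` with `|B| ≤ c` such that
`u^{(i,j)}(A_i) ≥ u^{(i,j)}(A_{i'} \ B)`. -/
def IsEF {k m : ℕ} (ns : Fin k → ℕ) (u : ∀ i : Fin k, Fin (ns i) → Fin m → ℝ)
    (χ : Fin m → Fin k) (c : ℝ) : Prop :=
  ∀ (i i' : Fin k) (j : Fin (ns i)), ∃ B : Finset (Fin m),
    (B.card : ℝ) ≤ c ∧
    ∑ g ∈ bundle χ i, u i j g ≥ ∑ g ∈ bundle χ i' \ B, u i j g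

lemma infNorm_nonneg {n : ℕ} (v : Fin n → ℝ) : 0 ≤ infNorm v :=
  Real.iSup_nonneg fun i => abs_nonneg _

lemma wdisc_le (p : ℝ) {n m : ℕ} (A : Matrix (Fin n) (Fin m) ℝ) (x : Fin m → Fin 2) :
    wdisc p A ≤ infNorm (A.mulVec (fun j => p - ((x j : ℕ) : ℝ))) :=
  ciInf_le ⟨0, fun _y ⟨x', hx'⟩ => hx' ▸ infNorm_nonneg _⟩ x

lemma wdisc_nr_zero {n m : ℕ} (hn : n = 0) (p : ℝ) (A : Matrix (Fin n) (Fin m) ℝ) :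
    wdisc p A = 0 := by
  subst hn
  unfold wdisc
  have h : ∀ x : Fin m → Fin 2,
      infNorm (A.mulVec fun j => p - ((x j : ℕ) : ℝ)) = 0 := fun x => by
    unfold infNorm; exact Real.iSup_of_isEmpty _
  simp only [h]
  exact ciInf_const

lemma exists_infNorm_le {n : ℕ} (hn : 0 < n) (v : Fin n → ℝ) : ∃ t, infNorm v ≤ |v t| := by
  haveI : Nonempty (Fin n) := Fin.pos_iff_nonempty.mp hn
  obtain ⟨t, ht⟩ := Finite.exists_max (fun i => |v i|)
  exact ⟨t, ciSup_le ht⟩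

noncomputable def Umat {n' m : ℕ} (A : Matrix (Fin n') (Fin m) ℝ) (N : ℕ)
    (j : Fin N) (g : Fin m) : ℝ :=
  if h : (j : ℕ) < n' then A ⟨j, h⟩ g
  else if h2 : (j : ℕ) < 2 * n' then 1 - A ⟨(j : ℕ) - n', by omega⟩ g
  else 0

lemma Umat_fst {n' m : ℕ} (A : Matrix (Fin n') (Fin m) ℝ) (N : ℕ) (t : Fin n')
    (h : (t : ℕ) < N) (g : Fin m) : Umat A N ⟨t, h⟩ g = A t g := by
  simp [Umat, t.isLt]

lemma Umat_snd {n' m : ℕ} (A : Matrix (Fin n') (Fin m) ℝ) (N : ℕ) (t : Fin n')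
    (h : n' + (t : ℕ) < N) (g : Fin m) : Umat A N ⟨n' + (t : ℕ), h⟩ g = 1 - A t g := by
  have h1 : ¬ (n' + (t : ℕ) < n') := by omega
  have h2 : n' + (t : ℕ) < 2 * n' := by have := t.isLt; omega
  have h3 : n' + (t : ℕ) - n' = (t : ℕ) := by omega
  simp [Umat, h1, h2, h3]

noncomputable def Util {k n' m : ℕ} (A : Matrix (Fin n') (Fin m) ℝ) (ns : Fin k → ℕ) :
    ∀ i : Fin k, Fin (ns i) → Fin m → ℝ :=
  fun i j g => if (i : ℕ) = 0 then Umat A (ns i) j g else 1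

lemma Util_mem {k n' m : ℕ} (A : Matrix (Fin n') (Fin m) ℝ)
    (hA : ∀ i j, A i j ∈ Set.Icc (0:ℝ) 1) (ns : Fin k → ℕ)
    (i : Fin k) (j : Fin (ns i)) (g : Fin m) : Util A ns i j g ∈ Set.Icc (0:ℝ) 1 := by
  unfold Util Umat
  split_ifs with h0 h1 h2
  · exact hA _ _
  · have := hA ⟨(j : ℕ) - n', by omega⟩ g
    rw [Set.mem_Icc] at this ⊢
    constructor <;> linarith [this.1, this.2]
  · simp [Set.mem_Icc]
  · simp [Set.mem_Icc]

lemma sum_le_sum_add_card {m : ℕ} (f : Fin m → ℝ) (hf1 : ∀ g, f g ≤ 1)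
    (T B : Finset (Fin m)) : ∑ g ∈ T, f g ≤ ∑ g ∈ T \ B, f g + B.card := by
  have h1 : ∑ g ∈ T ∩ B, f g + ∑ g ∈ T \ B, f g = ∑ g ∈ T, f g :=
    Finset.sum_inter_add_sum_sdiff T B f
  have h2 : ∑ g ∈ T ∩ B, f g ≤ ((T ∩ B).card : ℝ) := by
    calc ∑ g ∈ T ∩ B, f g ≤ ∑ _g ∈ T ∩ B, (1:ℝ) := Finset.sum_le_sum (fun g _ => hf1 g)
    _ = ((T ∩ B).card : ℝ) := by simp
  have h3 : ((T ∩ B).card : ℝ) ≤ (B.card : ℝ) := by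
    exact_mod_cast Finset.card_le_card (Finset.inter_subset_right)
  linarith


/-- Let `k ≥ 2` and `n₁ ≥ ⋯ ≥ n_k ≥ 1` be integers (given as an
antitone `ns : Fin k → ℕ`), and let `Δ` be such that some matrix
`A ∈ [0,1]^{⌊n₁/2⌋ × m}` has `wdisc_{1/k}(A) ≥ Δ`.  Then for every real `c < Δ/k`,
there exists a group fair division instance with group sizes `n₁, …, n_k` and all item
utilities in `[0,1]` that admits no EF`c` allocation.  Consequently
`c^EF(n₁,…,n_k) ≥ wdisc^max_{1/k}(⌊n₁/2⌋)/k`. -/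
theorem ef_lower_bound_from_wdisc_over_k (k : ℕ) (hk : 2 ≤ k) (ns : Fin k → ℕ)
    (hmono : ∀ a b : Fin k, a ≤ b → ns b ≤ ns a) (hpos : ∀ i, 1 ≤ ns i)
    (Δ : ℝ)
    (hΔ : ∃ (m : ℕ) (A : Matrix (Fin (ns ⟨0, by omega⟩ / 2)) (Fin m) ℝ),
      (∀ i j, A i j ∈ Set.Icc (0 : ℝ) 1) ∧ Δ ≤ wdisc (1 / (k : ℝ)) A) :
    ∀ c : ℝ, c < Δ / (k : ℝ) →
      ∃ (m : ℕ) (u : ∀ i : Fin k, Fin (ns i) → Fin m → ℝ),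
        (∀ i j g, u i j g ∈ Set.Icc (0 : ℝ) 1) ∧
        ∀ χ : Fin m → Fin k, ¬ IsEF ns u χ c := by
  
  intro c hc
  have hk0 : 0 < k := by omega
  by_cases hc0 : 0 ≤ c
  swap
  · -- c < 0 : trivial instance with no items
    refine ⟨0, fun _ _ _ => 0, fun i j g => by simp [Set.mem_Icc], fun χ hEF => ?_⟩
    obtain ⟨B, hB, -⟩ := hEF ⟨0, hk0⟩ ⟨0, hk0⟩ ⟨0, by have := hpos ⟨0, hk0⟩; omega⟩
    have hBn : (0:ℝ) ≤ (B.card : ℝ) := Nat.cast_nonneg _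
    push_neg at hc0
    linarith
  · -- re-type the matrix with a fixed proof term
    have hΔ' : ∃ (m : ℕ) (A : Matrix (Fin (ns ⟨0, hk0⟩ / 2)) (Fin m) ℝ),
        (∀ i j, A i j ∈ Set.Icc (0 : ℝ) 1) ∧ Δ ≤ wdisc (1 / (k : ℝ)) A := hΔ
    obtain ⟨m, A, hA, hAw⟩ := hΔ'
    have hkR : (0:ℝ) < (k:ℝ) := by exact_mod_cast hk0
    have hk2 : (2:ℝ) ≤ (k:ℝ) := by exact_mod_cast hk
    have hΔpos : 0 < Δ := by
      have h1 : 0 < Δ / (k:ℝ) := lt_of_le_of_lt hc0 hc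
      have h2 : Δ / (k:ℝ) * (k:ℝ) = Δ := div_mul_cancel₀ _ hkR.ne'
      nlinarith [mul_pos h1 hkR]
    have hcΔ : c * (k:ℝ) < Δ := (lt_div_iff₀ hkR).mp hc
    rcases Nat.eq_zero_or_pos (ns ⟨0, hk0⟩ / 2) with hz | hn'
    · exact absurd (hAw.trans_eq (wdisc_nr_zero hz _ A)) (by linarith)
    · refine ⟨m, Util A ns, Util_mem A hA ns, fun χ hEF => ?_⟩
      -- the key consequence of EFc
      have key : ∀ (i i' : Fin k) (j : Fin (ns i)),
          ∑ g ∈ bundle χ i', Util A ns i j g ≤ ∑ g ∈ bundle χ i, Util A ns i j g + c := by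
        intro i i' j
        obtain ⟨B, hB, hge⟩ := hEF i i' j
        have h := sum_le_sum_add_card (Util A ns i j)
          (fun g => (Util_mem A hA ns i j g).2) (bundle χ i') B
        linarith
      have hpart : ∀ f : Fin m → ℝ,
          ∑ i' : Fin k, ∑ g ∈ bundle χ i', f g = ∑ g, f g := by
        intro f
        simpa [bundle] using Finset.sum_fiberwise Finset.univ χ f
      -- apply the wdisc bound to the indicator of group 0's bundle
      set x : Fin m → Fin 2 := fun g => if χ g = ⟨0, hk0⟩ then 1 else 0 with hxdef
      have hwx := hAw.trans (wdisc_le (1/(k:ℝ)) A x)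
      obtain ⟨t, ht⟩ :=
        exists_infNorm_le hn' (A.mulVec fun j => 1/(k:ℝ) - ((x j : ℕ) : ℝ))
      have hΔt := hwx.trans ht
      have ht1 : (t : ℕ) < ns ⟨0, hk0⟩ / 2 := t.isLt
      -- evaluate the utilities of the three kinds of agents
      have hu1 : ∀ (h : (t:ℕ) < ns ⟨0, hk0⟩) (g : Fin m),
          Util A ns ⟨0, hk0⟩ ⟨(t:ℕ), h⟩ g = A t g := by
        intro h g
        show (if _ then _ else _) = _
        rw [if_pos rfl]
        exact Umat_fst A _ t h g
      have hu2 : ∀ (h : ns ⟨0, hk0⟩ / 2 + (t:ℕ) < ns ⟨0, hk0⟩) (g : Fin m),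
          Util A ns ⟨0, hk0⟩ ⟨ns ⟨0, hk0⟩ / 2 + (t:ℕ), h⟩ g = 1 - A t g := by
        intro h g
        show (if _ then _ else _) = _
        rw [if_pos rfl]
        exact Umat_snd A _ t h g
      have hu3 : ∀ (i' : Fin k), (i' : ℕ) ≠ 0 → ∀ (j : Fin (ns i')) (g : Fin m),
          Util A ns i' j g = 1 := by
        intro i' hi' j g
        exact if_neg hi'
      -- the three families of inequalities
      have H1 : ∀ i' : Fin k, ∑ g ∈ bundle χ i', A t g
          ≤ ∑ g ∈ bundle χ ⟨0, hk0⟩, A t g + c := by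
        intro i'
        have h := key ⟨0, hk0⟩ i' ⟨(t:ℕ), by omega⟩
        simp only [hu1] at h
        exact h
      have H2 : ∀ i' : Fin k, ∑ g ∈ bundle χ i', (1 - A t g)
          ≤ ∑ g ∈ bundle χ ⟨0, hk0⟩, (1 - A t g) + c := by
        intro i'
        have h := key ⟨0, hk0⟩ i' ⟨ns ⟨0, hk0⟩ / 2 + (t:ℕ), by omega⟩
        simp only [hu2] at h
        exact h
      have H3 : ∀ i' : Fin k, ∑ g ∈ bundle χ ⟨0, hk0⟩, (1:ℝ)
          ≤ ∑ g ∈ bundle χ i', (1:ℝ) + c := by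
        intro i'
        by_cases hi' : (i' : ℕ) = 0
        · have : i' = ⟨0, hk0⟩ := Fin.ext hi'
          rw [this]
          linarith
        · have h := key i' ⟨0, hk0⟩ ⟨0, by have := hpos i'; omega⟩
          simp only [hu3 i' hi'] at h
          exact h
      -- notation
      set v := ∑ g ∈ bundle χ ⟨0, hk0⟩, A t g with hv
      set s := ∑ g : Fin m, A t g with hs
      set C0 := ∑ _g ∈ bundle χ ⟨0, hk0⟩, (1:ℝ) with hC0
      -- summed inequalities
      have e1 : s ≤ (k:ℝ) * (v + c) := by
        calc s = ∑ i' : Fin k, ∑ g ∈ bundle χ i', A t g := (hpart (A t)).symm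
        _ ≤ ∑ _i' : Fin k, (v + c) := Finset.sum_le_sum (fun i' _ => H1 i')
        _ = (k:ℝ) * (v + c) := by
            rw [Finset.sum_const, Finset.card_univ, Fintype.card_fin, nsmul_eq_mul]
      have e3 : (k:ℝ) * C0 ≤ (m:ℝ) + (k:ℝ) * c := by
        have hCm : ∑ i' : Fin k, ∑ _g ∈ bundle χ i', (1:ℝ) = (m:ℝ) := by
          rw [hpart (fun _ => (1:ℝ))]
          simp
        calc (k:ℝ) * C0 = ∑ _i' : Fin k, C0 := by
              rw [Finset.sum_const, Finset.card_univ, Fintype.card_fin, nsmul_eq_mul]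
        _ ≤ ∑ i' : Fin k, (∑ _g ∈ bundle χ i', (1:ℝ) + c) :=
              Finset.sum_le_sum (fun i' _ => H3 i')
        _ = (m:ℝ) + (k:ℝ) * c := by
              rw [Finset.sum_add_distrib, hCm, Finset.sum_const, Finset.card_univ,
                Fintype.card_fin, nsmul_eq_mul]
      have e2 : (m:ℝ) - s ≤ (k:ℝ) * ((C0 - v) + c) := by
        have hms : ∑ i' : Fin k, ∑ g ∈ bundle χ i', (1 - A t g) = (m:ℝ) - s := by
          rw [hpart (fun g => 1 - A t g)]
          rw [Finset.sum_sub_distrib]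
          simp [hs]
        have hb0 : ∑ g ∈ bundle χ ⟨0, hk0⟩, (1 - A t g) = C0 - v := by
          rw [Finset.sum_sub_distrib]
        calc (m:ℝ) - s = ∑ i' : Fin k, ∑ g ∈ bundle χ i', (1 - A t g) := hms.symm
        _ ≤ ∑ _i' : Fin k, (∑ g ∈ bundle χ ⟨0, hk0⟩, (1 - A t g) + c) :=
              Finset.sum_le_sum (fun i' _ => H2 i')
        _ = (k:ℝ) * ((C0 - v) + c) := by
              rw [hb0, Finset.sum_const, Finset.card_univ, Fintype.card_fin, nsmul_eq_mul]
      -- compute the mulVec entry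
      have hmv : (A.mulVec fun j => 1/(k:ℝ) - ((x j : ℕ) : ℝ)) t
          = s / (k:ℝ) - v := by
        simp only [Matrix.mulVec, dotProduct]
        have hterm : ∀ j : Fin m,
            A t j * (1/(k:ℝ) - ((x j : ℕ) : ℝ))
            = A t j * (1/(k:ℝ)) - (if χ j = ⟨0, hk0⟩ then A t j else 0) := by
          intro j
          by_cases hj : χ j = ⟨0, hk0⟩ <;> simp [hxdef, hj] <;> ring
        rw [Finset.sum_congr rfl (fun j _ => hterm j), Finset.sum_sub_distrib]
        congr 1
        · rw [← Finset.sum_mul, mul_one_div]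
        · rw [hv]
          simp [bundle, Finset.sum_filter]
      rw [hmv] at hΔt
      -- final contradiction
      rcases abs_cases (s / (k:ℝ) - v) with ⟨he, -⟩ | ⟨he, -⟩ <;> rw [he] at hΔt
      · -- Δ ≤ s/k - v
        have h' : (Δ + v) * (k:ℝ) ≤ s := (le_div_iff₀ hkR).mp (by linarith)
        nlinarith [mul_nonneg hΔpos.le (by linarith : (0:ℝ) ≤ (k:ℝ) - 2)]
      · -- Δ ≤ v - s/k
        have h' : s ≤ (v - Δ) * (k:ℝ) := by
          have : s / (k:ℝ) ≤ v - Δ := by linarith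
          exact (div_le_iff₀ hkR).mp this
        nlinarith [mul_nonneg hc0 (by linarith : (0:ℝ) ≤ (k:ℝ) - 2)]
end

section
/- Suppose γ ≥ 1 is a constant such that for every n, m ∈ ℕ, p ∈ [0,1], and matrix A ∈ [0,1]^{n×m}, there exists x ∈ {0,1}^m with ‖A(p·𝟏 − x)‖_∞ ≤ γ·√n. Then, setting ζ = 100γ, the following holds for all positive integers k and all n₁ ≥ n₂ ≥ ... ≥ n_k ≥ 1: for every m ∈ ℕ and all matrices A¹ ∈ [0,1]^{n₁×m}, ..., A^k ∈ [0,1]^{n_k×m}, there exists a coloring χ: [m] → [k] such that for every s ∈ [k], ‖A^s((1/k)·𝟏 − 𝟏(χ⁻¹(s)))‖_∞ ≤ ζ·(1 − 1/√k)·√n₁. -/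
/-!
Split the `k` colours into halves of sizes `q = ⌈k/2⌉` and `k - q`. Stack all rows into one
matrix with at most `k n₁` rows and apply the weighted bound with `p = q / k`: the columns with
`x_j = 1` go to the first half, the others to the second, and each half is coloured recursively.
For a row of a colour in a half of size `q`, the error `1/k - 𝟏[χ j = s]` splits as
`(1/q) (q/k - x_j)` plus the error of the recursive colouring, so the row discrepancy is at most
`γ √(k n₁) / q + ζ (1 - 1/√q) √n₁`, which is at most `ζ (1 - 1/√k) √n₁` because
`k/4 ≤ q ≤ 3k/4`. Throughout the recursion the matrices `A^s` stay stacked as one matrix whose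
rows are labelled by their colour; only the number of rows of each colour, at most `n₁`, matters.
-/

open Finset

lemma div_sq_le_sub_inv {a b : ℝ} (ha : 0 < a) (hb : 0 < b) (h₁ : 4 * a ^ 2 ≤ 3 * b ^ 2)
    (h₂ : b ≤ 2 * a) : b / a ^ 2 ≤ 100 * (1 / a - 1 / b) := by
  -- `b / a ≥ 2 / √3 > 50 / 49`
  have h49 : 50 * a ≤ 49 * b := by nlinarith
  have hsq : b ^ 2 ≤ 100 * a * (b - a) := by nlinarith
  rw [div_le_iff₀ (by positivity)]
  have : 100 * (1 / a - 1 / b) * a ^ 2 = 100 * a * (b - a) / b := by field_simp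
  rw [this, le_div_iff₀ hb, ← sq]
  exact hsq

lemma one_div_mul_add_le {γ q k n : ℝ} (hγ : 0 ≤ γ) (hq : 0 < q) (h₁ : 4 * q ≤ 3 * k)
    (h₂ : k ≤ 4 * q) :
    1 / q * (γ * √(k * n)) + 100 * γ * (1 - 1 / √q) * √n ≤ 100 * γ * (1 - 1 / √k) * √n := by
  have hk : 0 < k := by linarith
  have h := div_sq_le_sub_inv (Real.sqrt_pos.2 hq) (Real.sqrt_pos.2 hk)
    (by rw [Real.sq_sqrt hq.le, Real.sq_sqrt hk.le]; linarith)
    (by rw [Real.sqrt_le_left (by positivity), mul_pow, Real.sq_sqrt hq.le]; linarith)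
  rw [Real.sq_sqrt hq.le] at h
  have := mul_le_mul_of_nonneg_left h (mul_nonneg hγ (Real.sqrt_nonneg n))
  rw [Real.sqrt_mul hk.le]
  linear_combination this

/-- The weighted discrepancy bound of Lovász–Spencer–Vesztergombi with constant `γ`. -/
def WeightedDiscBound (γ : ℝ) : Prop :=
  ∀ (n m : ℕ) (p : ℝ), p ∈ Set.Icc (0 : ℝ) 1 →
      ∀ A : Matrix (Fin n) (Fin m) ℝ, (∀ i j, A i j ∈ Set.Icc (0 : ℝ) 1) →
        ∃ x : Fin m → ℝ, (∀ j, x j = 0 ∨ x j = 1) ∧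
          ∀ i : Fin n, |A.mulVec (fun j => p - x j) i| ≤ γ * Real.sqrt n

namespace WeightedDiscBound

variable {γ : ℝ} {ι β : Type*}

theorem exists_abs_sum_le (h : WeightedDiscBound γ) [Fintype ι] [Fintype β] {p : ℝ}
    (hp : p ∈ Set.Icc (0 : ℝ) 1) (A : ι → β → ℝ) (hA : ∀ i j, A i j ∈ Set.Icc (0 : ℝ) 1) :
    ∃ x : β → ℝ, (∀ j, x j = 0 ∨ x j = 1) ∧
      ∀ i, |∑ j, A i j * (p - x j)| ≤ γ * √(Fintype.card ι) := by
  set eι := Fintype.equivFin ι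
  set eβ := Fintype.equivFin β
  obtain ⟨x, hx01, hx⟩ := h _ _ p hp (fun a b => A (eι.symm a) (eβ.symm b)) fun _ _ => hA _ _
  refine ⟨x ∘ eβ, fun j => hx01 _, fun i => ?_⟩
  rw [← eβ.symm.sum_comp]
  simpa [Matrix.mulVec, dotProduct] using hx (eι i)

theorem exists_subset_abs_sum_le (h : WeightedDiscBound γ) [DecidableEq β] {p : ℝ}
    (hp : p ∈ Set.Icc (0 : ℝ) 1) (R : Finset ι) (J : Finset β) (A : ι → β → ℝ)
    (hA : ∀ i j, A i j ∈ Set.Icc (0 : ℝ) 1) :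
    ∃ J₁ ⊆ J, ∀ i ∈ R, |∑ j ∈ J, A i j * (p - if j ∈ J₁ then 1 else 0)| ≤ γ * √(#R) := by
  obtain ⟨x, hx01, hx⟩ := h.exists_abs_sum_le hp (fun (i : R) (j : J) => A i j) fun _ _ => hA _ _
  set J₁ := (J.attach.filter (x · = 1)).map (Function.Embedding.subtype _)
  have hJ₁ : ∀ j : J, (if j.1 ∈ J₁ then 1 else 0) = x j := fun j => by
    rcases hx01 j with h0 | h1 <;> simp [J₁, *]
  refine ⟨J₁, fun j hj => ?_, fun i hi => ?_⟩
  · simp only [J₁, mem_map, mem_filter, Function.Embedding.subtype_apply] at hj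
    obtain ⟨j, -, rfl⟩ := hj
    exact j.2
  · rw [← sum_coe_sort]
    simpa only [hJ₁, Fintype.card_coe] using hx ⟨i, hi⟩

end WeightedDiscBound

section Coloring

variable {ι β κ : Type*} [DecidableEq β] [DecidableEq κ]

theorem sum_mul_inv_sub_ite_eq (a : β → ℝ) {J J' : Finset β} (hJ' : J' ⊆ J) (χ : β → κ) (s : κ)
    (hχ : ∀ j ∈ J \ J', χ j ≠ s) {k q : ℝ} (hq : q ≠ 0) :
    ∑ j ∈ J, a j * (1 / k - if χ j = s then 1 else 0) =
      1 / q * ∑ j ∈ J, a j * (q / k - if j ∈ J' then 1 else 0) +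
        ∑ j ∈ J', a j * (1 / q - if χ j = s then 1 else 0) := by
  have hJ'sum : ∑ j ∈ J', a j * (1 / q - if χ j = s then 1 else 0) =
      ∑ j ∈ J, a j * ((if j ∈ J' then 1 / q else 0) - if χ j = s then 1 else 0) := by
    refine sum_subset_zero_on_sdiff hJ' (fun j hj => ?_) fun j hj => by simp [hj]
    simp [(mem_sdiff.1 hj).2, hχ j hj]
  rw [hJ'sum, mul_sum, ← sum_add_distrib]
  refine sum_congr rfl fun j _ => ?_
  split_ifs <;> field_simp <;> ring

theorem abs_sum_mul_sub_ite_sdiff (a : β → ℝ) (J J₁ : Finset β) (p : ℝ) :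
    |∑ j ∈ J, a j * (1 - p - if j ∈ J \ J₁ then 1 else 0)| =
      |∑ j ∈ J, a j * (p - if j ∈ J₁ then 1 else 0)| := by
  rw [← abs_neg, ← sum_neg_distrib]
  refine congrArg _ (sum_congr rfl fun j hj => ?_)
  by_cases h : j ∈ J₁ <;> simp [h, hj]
  ring

theorem abs_sum_le_of_split {γ n : ℝ} (hγ : 0 ≤ γ) {k q : ℕ} (hq : 0 < q) (h₁ : 4 * q ≤ 3 * k)
    (h₂ : k ≤ 4 * q) (a : β → ℝ) {J J' : Finset β} (hJ' : J' ⊆ J) {χ χ' : β → κ} {s : κ}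
    (hχ : ∀ j ∈ J \ J', χ j ≠ s) (hχ' : ∀ j ∈ J', χ j = χ' j)
    (hdisc : |∑ j ∈ J, a j * (q / k - if j ∈ J' then 1 else 0)| ≤ γ * √(k * n))
    (hrec : |∑ j ∈ J', a j * (1 / q - if χ' j = s then 1 else 0)| ≤
      100 * γ * (1 - 1 / √q) * √n) :
    |∑ j ∈ J, a j * (1 / k - if χ j = s then 1 else 0)| ≤ 100 * γ * (1 - 1 / √k) * √n := by
  have hq' : (0 : ℝ) < q := Nat.cast_pos.2 hq
  have hχ'sum : ∑ j ∈ J', a j * (1 / q - if χ j = s then 1 else 0) =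
      ∑ j ∈ J', a j * (1 / q - if χ' j = s then 1 else 0) :=
    sum_congr rfl fun j hj => by rw [hχ' j hj]
  rw [sum_mul_inv_sub_ite_eq a hJ' χ s hχ hq'.ne', hχ'sum]
  calc _ ≤ 1 / q * |∑ j ∈ J, a j * (q / k - if j ∈ J' then 1 else 0)| +
        |∑ j ∈ J', a j * (1 / q - if χ' j = s then 1 else 0)| := by
        refine (abs_add_le _ _).trans_eq ?_
        rw [abs_mul, abs_of_pos (by positivity)]
    _ ≤ 1 / q * (γ * √(k * n)) + 100 * γ * (1 - 1 / √q) * √n := by gcongr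
    _ ≤ _ := one_div_mul_add_le hγ hq' (by exact_mod_cast h₁) (by exact_mod_cast h₂)

theorem card_filter_mem_le_mul [Fintype ι] (c : ι → κ) {n : ℕ} (hc : ∀ s, #{i | c i = s} ≤ n)
    (K : Finset κ) : #{i | c i ∈ K} ≤ #K * n := by
  rw [mul_comm]
  exact card_le_mul_card_image_of_maps_to (fun i hi => (mem_filter.1 hi).2) n
    fun s _ => (card_le_card (filter_subset_filter _ (filter_subset _ _))).trans (hc s)

theorem abs_sum_piecewise_le {γ n : ℝ} (hγ : 0 ≤ γ) {K K₁ : Finset κ} (hK₁K : K₁ ⊆ K)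
    (h₁ : 4 * #K₁ ≤ 3 * #K) (h₂ : #K ≤ 4 * #K₁) {J J₁ : Finset β} (hJ₁J : J₁ ⊆ J)
    {χ₁ χ₂ : β → κ} (hχ₁K : ∀ j ∈ J₁, χ₁ j ∈ K₁) (hχ₂K : ∀ j ∈ J \ J₁, χ₂ j ∈ K \ K₁)
    (a : β → ℝ) {s : κ} (hs : s ∈ K)
    (hdisc : |∑ j ∈ J, a j * (#K₁ / #K - if j ∈ J₁ then 1 else 0)| ≤ γ * √(#K * n))
    (hrec₁ : s ∈ K₁ → |∑ j ∈ J₁, a j * (1 / #K₁ - if χ₁ j = s then 1 else 0)| ≤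
      100 * γ * (1 - 1 / √(#K₁)) * √n)
    (hrec₂ : s ∈ K \ K₁ → |∑ j ∈ J \ J₁, a j * (1 / #(K \ K₁) - if χ₂ j = s then 1 else 0)| ≤
      100 * γ * (1 - 1 / √(#(K \ K₁))) * √n) :
    |∑ j ∈ J, a j * (1 / #K - if J₁.piecewise χ₁ χ₂ j = s then 1 else 0)| ≤
      100 * γ * (1 - 1 / √(#K)) * √n := by
  have hK : 0 < #K := card_pos.2 ⟨s, hs⟩
  have hK₂ : #(K \ K₁) = #K - #K₁ := card_sdiff_of_subset hK₁K
  have hχ₁J (j) (hj : j ∈ J₁) : J₁.piecewise χ₁ χ₂ j = χ₁ j := piecewise_eq_of_mem _ _ _ hj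
  have hχ₂J (j) (hj : j ∈ J \ J₁) : J₁.piecewise χ₁ χ₂ j = χ₂ j :=
    piecewise_eq_of_notMem _ _ _ (mem_sdiff.1 hj).2
  by_cases hs₁ : s ∈ K₁
  · refine abs_sum_le_of_split hγ (by omega) h₁ h₂ a hJ₁J
      (fun j hj h => (mem_sdiff.1 (hχ₂K j hj)).2 ?_) hχ₁J hdisc (hrec₁ hs₁)
    rwa [← hχ₂J j hj, h]
  · have hcompl : (#(K \ K₁) / #K : ℝ) = 1 - #K₁ / #K := by
      have : (#K : ℝ) ≠ 0 := Nat.cast_ne_zero.2 hK.ne'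
      rw [hK₂, Nat.cast_sub (card_le_card hK₁K)]
      field_simp
    have hJ₁ {j} (hj : j ∈ J \ (J \ J₁)) : j ∈ J₁ := by simpa [(mem_sdiff.1 hj).1] using hj
    refine abs_sum_le_of_split hγ (by omega) (by omega) (by omega) a sdiff_subset
      (fun j hj h => hs₁ ?_) hχ₂J (by rwa [hcompl, abs_sum_mul_sub_ite_sdiff])
      (hrec₂ (mem_sdiff.2 ⟨hs, hs₁⟩))
    rw [← h, hχ₁J j (hJ₁ hj)]
    exact hχ₁K j (hJ₁ hj)

theorem exists_coloring_abs_sum_le {γ : ℝ} (hLSV : WeightedDiscBound γ) (hγ : 0 ≤ γ)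
    [Fintype ι] (c : ι → κ) (A : ι → β → ℝ) (hA : ∀ i j, A i j ∈ Set.Icc (0 : ℝ) 1) {n : ℕ}
    (hc : ∀ s, #{i | c i = s} ≤ n) (K : Finset κ) (hK : K.Nonempty) (J : Finset β) :
    ∃ χ : β → κ, (∀ j ∈ J, χ j ∈ K) ∧ ∀ i, c i ∈ K →
      |∑ j ∈ J, A i j * (1 / #K - if χ j = c i then 1 else 0)| ≤
        100 * γ * (1 - 1 / √(#K)) * √n := by
  induction K using Finset.strongInduction generalizing J with
  | H K ih =>
  obtain hK1 | hK2 : #K = 1 ∨ 2 ≤ #K := by have := hK.card_pos; omega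
  · obtain ⟨s, rfl⟩ := card_eq_one.1 hK1
    refine ⟨fun _ => s, fun _ _ => mem_singleton_self s, fun i hi => ?_⟩
    simp [mem_singleton.1 hi]
  obtain ⟨K₁, hK₁K, hK₁⟩ := exists_subset_card_eq (show (#K + 1) / 2 ≤ #K by omega)
  have hK₁ne : K₁.Nonempty := card_pos.1 (by omega)
  have hp : (#K₁ / #K : ℝ) ∈ Set.Icc (0 : ℝ) 1 :=
    ⟨by positivity, div_le_one_of_le₀ (by exact_mod_cast card_le_card hK₁K) (by positivity)⟩
  obtain ⟨J₁, hJ₁J, hdisc⟩ := hLSV.exists_subset_abs_sum_le hp {i | c i ∈ K} J A hA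
  obtain ⟨χ₁, hχ₁K, hχ₁⟩ :=
    ih K₁ (ssubset_of_subset_of_ne hK₁K (by rintro rfl; omega)) hK₁ne J₁
  obtain ⟨χ₂, hχ₂K, hχ₂⟩ :=
    ih (K \ K₁) (sdiff_ssubset hK₁K hK₁ne) (card_pos.1 (by rw [card_sdiff_of_subset hK₁K]; omega))
      (J \ J₁)
  refine ⟨J₁.piecewise χ₁ χ₂, fun j hj => ?_, fun i hi => ?_⟩
  · by_cases h : j ∈ J₁
    · simpa [h] using hK₁K (hχ₁K j h)
    · simpa [h] using (mem_sdiff.1 (hχ₂K j (mem_sdiff.2 ⟨hj, h⟩))).1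
  refine abs_sum_piecewise_le hγ hK₁K (by omega) (by omega) hJ₁J hχ₁K hχ₂K (A i) hi
    ((hdisc i (by simpa using hi)).trans ?_) (hχ₁ i) (hχ₂ i)
  gcongr
  exact_mod_cast card_filter_mem_le_mul c hc K

end Coloring

/-- Suppose `γ ≥ 1` is a constant such that for every `n, m ∈ ℕ`,
`p ∈ [0,1]`, and matrix `A ∈ [0,1]^{n×m}`, there exists `x ∈ {0,1}^m` with
`‖A(p·𝟏 − x)‖_∞ ≤ γ·√n`.  Then, with `ζ = 100γ`, for all positive integers `k`, all
`n₁ ≥ ⋯ ≥ n_k ≥ 1` (antitone `ns : Fin k → ℕ`), every `m ∈ ℕ`, and all matrices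
`A^s ∈ [0,1]^{n_s × m}` (`s ∈ [k]`), there exists a coloring `χ : [m] → [k]` such that
for every `s ∈ [k]`, `‖A^s((1/k)·𝟏 − 𝟏(χ⁻¹(s)))‖_∞ ≤ ζ·(1 − 1/√k)·√n₁`. -/
theorem odisc_recursion (γ : ℝ) (hγ : 1 ≤ γ)
    (hLSV : ∀ (n m : ℕ) (p : ℝ), p ∈ Set.Icc (0 : ℝ) 1 →
      ∀ A : Matrix (Fin n) (Fin m) ℝ, (∀ i j, A i j ∈ Set.Icc (0 : ℝ) 1) →
        ∃ x : Fin m → ℝ, (∀ j, x j = 0 ∨ x j = 1) ∧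
          ∀ i : Fin n, |A.mulVec (fun j => p - x j) i| ≤ γ * Real.sqrt n) :
    ∀ (k : ℕ) (hk : 0 < k) (ns : Fin k → ℕ),
      (∀ a b : Fin k, a ≤ b → ns b ≤ ns a) → (∀ i, 1 ≤ ns i) →
      ∀ (m : ℕ) (A : ∀ s : Fin k, Matrix (Fin (ns s)) (Fin m) ℝ),
        (∀ s i j, A s i j ∈ Set.Icc (0 : ℝ) 1) →
        ∃ χ : Fin m → Fin k, ∀ (s : Fin k) (i : Fin (ns s)),
          |(A s).mulVec (fun j => 1 / (k : ℝ) - if χ j = s then 1 else 0) i|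
            ≤ (100 * γ) * (1 - 1 / Real.sqrt k) * Real.sqrt (ns ⟨0, hk⟩) := by
  intro k hk ns hmono _ m A hA
  have hfiber (s : Fin k) : #{i : (s : Fin k) × Fin (ns s) | i.1 = s} ≤ ns ⟨0, hk⟩ := by
    rw [card_filter, Fintype.sum_sigma]
    simpa [apply_ite] using hmono ⟨0, hk⟩ s (Nat.zero_le _)
  obtain ⟨χ, -, hχ⟩ := exists_coloring_abs_sum_le hLSV (by linarith) Sigma.fst
    (fun i j => A i.1 i.2 j) (fun i j => hA _ _ _) hfiber univ ⟨⟨0, hk⟩, mem_univ _⟩ univ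
  refine ⟨χ, fun s i => ?_⟩
  simpa [Matrix.mulVec, dotProduct] using hχ ⟨s, i⟩ (mem_univ _)
end
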